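/- arXiv:1402.6565 — 6 statements merged into one kernel-verified Lean document; each statement's English description precedes it below -/
import Mathlib

section
/- Let p be an odd prime. Define S = S1 ∪ S2, where S1 = {(k,d) : 1 ≤ k ≤ d ≤ p+1−k} and S2 = {(k, b·p+d) : b ≥ 1, 1 ≤ k ≤ (p+1)/2, k−1 ≤ d ≤ p+1−k}. If 1 ≤ m < p and n ≥ m, then the Jordan partition λ(m,n,p) is standard if and only if (m,n) ∈ S. -/
/-- The negative reverse of a sequence `(a₁, …, a_u)`, namely `(−a_u, …, −a₁)`. -/
def negRev (s : List ℤ) : List ℤ := s.reverse.map (fun x => -x)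

/-- Fuel-based implementation of Barry's recursively defined sequence `s_p(m,n)`.
In every recursive call the quantity `2*m + n` strictly decreases, so fuel
`2*m + n + 1` always suffices; see `sp` below. -/
def spAux (p : ℕ) : ℕ → ℕ → ℕ → List ℤ
  | 0, _, _ => []
  | (fuel+1), m, n =>
    if m = 0 then List.replicate n (0 : ℤ)
    else
      let k := Nat.log p n
      let q := p ^ k
      let b := n / q
      let d := n % q
      let a := m / q
      let c := m % q
      let s12 : List ℤ × List ℤ :=
        if p ^ (k+1) < m + n then
          -- Case 1
          (List.replicate (m + n - p ^ (k+1)) ((p ^ (k+1) : ℕ) : ℤ),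
           spAux p fuel (p ^ (k+1) - n) (p ^ (k+1) - m))
        else if q < c + d then
          -- Case 2
          (List.replicate (c + d - q) (((a + b + 1) * q : ℕ) : ℤ),
           spAux p fuel ((a + b + 1) * q - n) ((a + b + 1) * q - m))
        else if 1 ≤ c + d ∧ 0 < a then
          -- Case 3
          ((spAux p fuel (min c d) (max c d)).map (fun x => x + (((a + b) * q : ℕ) : ℤ)),
           spAux p fuel ((a + b) * q - n) ((a + b) * q - m))
        else if a = 0 ∧ 0 < d then
          -- Case 4
          (((spAux p fuel m (b * q - d)).filter (fun x => decide (x < 0))).map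
              (fun x => x + ((2 * b * q : ℕ) : ℤ)),
           List.replicate (n - m) (0 : ℤ))
        else if a = 0 ∧ d = 0 then
          -- Case 5
          (List.replicate m ((b * q : ℕ) : ℤ),
           List.replicate (b * q - m) (0 : ℤ))
        else
          -- Case 6
          (List.replicate q (((a + b - 1) * q : ℕ) : ℤ),
           spAux p fuel ((a - 1) * q) ((b - 1) * q))
      s12.1 ++ s12.2 ++ negRev s12.1

/-- Barry's sequence `s_p(m,n)`, a nonincreasing sequence of `m + n` integers. -/
def sp (p m n : ℕ) : List ℤ := spAux p (2 * m + n + 1) m n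

/-- The Jordan partition `λ(m,n,p)`: the first `m` terms of `s_p(m,n)`. -/
def jordanPartition (p m n : ℕ) : List ℤ := (sp p m n).take m

/-- `λ(m,n,p)` is standard iff `λ_i = m + n − 2i + 1` for all `1 ≤ i ≤ m`. -/
def IsStandard (p m n : ℕ) : Prop :=
  jordanPartition p m n =
    (List.range m).map (fun i => (m : ℤ) + (n : ℤ) - 2 * ((i : ℤ) + 1) + 1)


namespace BarryAux

lemma negRev_append (s t : List ℤ) : negRev (s ++ t) = negRev t ++ negRev s := by
  simp [negRev]

lemma negRev_replicate (k : ℕ) (x : ℤ) : negRev (List.replicate k x) = List.replicate k (-x) := by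
  simp [negRev, List.map_replicate]

lemma negRev_length (s : List ℤ) : (negRev s).length = s.length := by simp [negRev]

/-- spAux is fuel-independent once fuel exceeds `2*m+n`. -/
lemma spAux_congr (p : ℕ) (hp : 2 ≤ p) :
    ∀ f g m n, 2 * m + n < f → 2 * m + n < g → spAux p f m n = spAux p g m n := by
  intro f
  induction f using Nat.strong_induction_on with
  | _ f IH =>
    intro g m n hf hg
    match f, g with
    | f + 1, g + 1 =>
      by_cases hm : m = 0
      · simp [spAux, hm]
      rw [spAux, spAux]
      simp only [if_neg hm]
      have hq : 0 < p ^ Nat.log p n := Nat.pow_pos (by omega)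
      set q := p ^ Nat.log p n with hqdef
      have h1 : q * (m / q) + m % q = m := Nat.div_add_mod m q
      have h2 : q * (n / q) + n % q = n := Nat.div_add_mod n q
      have hcq : m % q < q := Nat.mod_lt _ hq
      have hdq : n % q < q := Nat.mod_lt _ hq
      split_ifs with h1' h2' h3' h4' h5'
      · -- case 1
        rw [IH f (by omega) g _ _ (by omega) (by omega)]
      · -- case 2
        have e : (m / q + n / q + 1) * q = q * (m / q) + q * (n / q) + q := by ring
        rw [IH f (by omega) g _ _ (by omega) (by omega)]
      · -- case 3
        have e : (m / q + n / q) * q = q * (m / q) + q * (n / q) := by ring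
        have ha : q ≤ q * (m / q) := Nat.le_mul_of_pos_right q h3'.2
        rcases le_total (m % q) (n % q) with hcd | hcd
        · rw [min_eq_left hcd, max_eq_right hcd,
            IH f (by omega) g _ _ (by omega) (by omega),
            IH f (by omega) g _ _ (by omega) (by omega)]
        · rw [min_eq_right hcd, max_eq_left hcd,
            IH f (by omega) g _ _ (by omega) (by omega),
            IH f (by omega) g _ _ (by omega) (by omega)]
      · -- case 4
        have e : (n / q) * q = q * (n / q) := by ring
        rw [IH f (by omega) g _ _ (by omega) (by omega)]
      · -- case 5
        rfl
      · -- case 6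
        have ha : m / q ≠ 0 := by
          rintro h0
          rcases Nat.eq_zero_or_pos (n % q) with hd0 | hd0
          · exact h5' ⟨h0, hd0⟩
          · exact h4' ⟨h0, hd0⟩
        have hcd0 : m % q + n % q = 0 := by
          by_contra hne
          exact h3' ⟨by omega, Nat.pos_of_ne_zero ha⟩
        have e : (m / q - 1) * q = q * (m / q) - q := by
          rw [Nat.sub_mul, one_mul, Nat.mul_comm]
        have e2 : (n / q - 1) * q = q * (n / q) - q := by
          rw [Nat.sub_mul, one_mul, Nat.mul_comm]
        have ha2 : q ≤ q * (m / q) := Nat.le_mul_of_pos_right q (Nat.pos_of_ne_zero ha)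
        rw [IH f (by omega) g _ _ (by omega) (by omega)]

lemma spAux_eq_sp (p : ℕ) (hp : 2 ≤ p) (f m n : ℕ) (h : 2 * m + n < f) :
    spAux p f m n = sp p m n :=
  spAux_congr p hp f (2 * m + n + 1) m n h (by omega)

section Cases

variable (p m n : ℕ)

/-- Case 1 unfolding. -/
lemma sp_case1 (hp : 2 ≤ p) (hm : m ≠ 0) (h1 : p ^ (Nat.log p n + 1) < m + n) :
    sp p m n =
      List.replicate (m + n - p ^ (Nat.log p n + 1)) ((p ^ (Nat.log p n + 1) : ℕ) : ℤ)
        ++ sp p (p ^ (Nat.log p n + 1) - n) (p ^ (Nat.log p n + 1) - m)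
        ++ negRev (List.replicate (m + n - p ^ (Nat.log p n + 1))
            ((p ^ (Nat.log p n + 1) : ℕ) : ℤ)) := by
  rw [sp, spAux]
  simp only [if_neg hm, if_pos h1]
  rw [spAux_eq_sp p hp _ _ _ (by omega)]

/-- Case 2 unfolding. -/
lemma sp_case2 (hp : 2 ≤ p) (hm : m ≠ 0)
    (h1 : ¬ p ^ (Nat.log p n + 1) < m + n)
    (h2 : p ^ Nat.log p n < m % p ^ Nat.log p n + n % p ^ Nat.log p n) :
    sp p m n =
      (let q := p ^ Nat.log p n
      List.replicate (m % q + n % q - q) (((m / q + n / q + 1) * q : ℕ) : ℤ)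
        ++ sp p ((m / q + n / q + 1) * q - n) ((m / q + n / q + 1) * q - m)
        ++ negRev (List.replicate (m % q + n % q - q) (((m / q + n / q + 1) * q : ℕ) : ℤ))) := by
  rw [sp, spAux]
  simp only [if_neg hm, if_neg h1, if_pos h2]
  have hq : 0 < p ^ Nat.log p n := Nat.pow_pos (by omega)
  set q := p ^ Nat.log p n with hqdef
  have hd1 : q * (m / q) + m % q = m := Nat.div_add_mod m q
  have hd2 : q * (n / q) + n % q = n := Nat.div_add_mod n q
  have e : (m / q + n / q + 1) * q = q * (m / q) + q * (n / q) + q := by ring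
  rw [spAux_eq_sp p hp _ _ _ (by omega)]

/-- Case 3 unfolding. -/
lemma sp_case3 (hp : 2 ≤ p) (hm : m ≠ 0)
    (h1 : ¬ p ^ (Nat.log p n + 1) < m + n)
    (h2 : ¬ p ^ Nat.log p n < m % p ^ Nat.log p n + n % p ^ Nat.log p n)
    (h3 : 1 ≤ m % p ^ Nat.log p n + n % p ^ Nat.log p n ∧ 0 < m / p ^ Nat.log p n) :
    sp p m n =
      (let q := p ^ Nat.log p n
      (sp p (min (m % q) (n % q)) (max (m % q) (n % q))).map
          (fun x => x + (((m / q + n / q) * q : ℕ) : ℤ))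
        ++ sp p ((m / q + n / q) * q - n) ((m / q + n / q) * q - m)
        ++ negRev ((sp p (min (m % q) (n % q)) (max (m % q) (n % q))).map
            (fun x => x + (((m / q + n / q) * q : ℕ) : ℤ)))) := by
  rw [sp, spAux]
  simp only [if_neg hm, if_neg h1, if_neg h2, if_pos h3]
  have hq : 0 < p ^ Nat.log p n := Nat.pow_pos (by omega)
  set q := p ^ Nat.log p n with hqdef
  have hd1 : q * (m / q) + m % q = m := Nat.div_add_mod m q
  have hd2 : q * (n / q) + n % q = n := Nat.div_add_mod n q
  have hcq : m % q < q := Nat.mod_lt _ hq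
  have hdq : n % q < q := Nat.mod_lt _ hq
  have e : (m / q + n / q) * q = q * (m / q) + q * (n / q) := by ring
  have ha : q ≤ q * (m / q) := Nat.le_mul_of_pos_right q h3.2
  rcases le_total (m % q) (n % q) with hcd | hcd
  · rw [min_eq_left hcd, max_eq_right hcd, spAux_eq_sp p hp _ _ _ (by omega),
      spAux_eq_sp p hp _ _ _ (by omega)]
  · rw [min_eq_right hcd, max_eq_left hcd, spAux_eq_sp p hp _ _ _ (by omega),
      spAux_eq_sp p hp _ _ _ (by omega)]

/-- Case 4 unfolding. -/
lemma sp_case4 (hp : 2 ≤ p) (hm : m ≠ 0)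
    (h1 : ¬ p ^ (Nat.log p n + 1) < m + n)
    (h2 : ¬ p ^ Nat.log p n < m % p ^ Nat.log p n + n % p ^ Nat.log p n)
    (h3 : ¬ (1 ≤ m % p ^ Nat.log p n + n % p ^ Nat.log p n ∧ 0 < m / p ^ Nat.log p n))
    (h4 : m / p ^ Nat.log p n = 0 ∧ 0 < n % p ^ Nat.log p n) :
    sp p m n =
      (let q := p ^ Nat.log p n
      ((sp p m (n / q * q - n % q)).filter (fun x => decide (x < 0))).map
          (fun x => x + ((2 * (n / q) * q : ℕ) : ℤ))
        ++ List.replicate (n - m) (0 : ℤ)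
        ++ negRev (((sp p m (n / q * q - n % q)).filter (fun x => decide (x < 0))).map
            (fun x => x + ((2 * (n / q) * q : ℕ) : ℤ)))) := by
  rw [sp, spAux]
  simp only [if_neg hm, if_neg h1, if_neg h2, if_neg h3, if_pos h4]
  have hq : 0 < p ^ Nat.log p n := Nat.pow_pos (by omega)
  set q := p ^ Nat.log p n with hqdef
  have hd2 : q * (n / q) + n % q = n := Nat.div_add_mod n q
  have e : (n / q) * q = q * (n / q) := by ring
  rw [spAux_eq_sp p hp _ _ _ (by omega)]

/-- Case 5 unfolding. -/
lemma sp_case5 (hm : m ≠ 0)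
    (h1 : ¬ p ^ (Nat.log p n + 1) < m + n)
    (h2 : ¬ p ^ Nat.log p n < m % p ^ Nat.log p n + n % p ^ Nat.log p n)
    (h3 : ¬ (1 ≤ m % p ^ Nat.log p n + n % p ^ Nat.log p n ∧ 0 < m / p ^ Nat.log p n))
    (h4 : ¬ (m / p ^ Nat.log p n = 0 ∧ 0 < n % p ^ Nat.log p n))
    (h5 : m / p ^ Nat.log p n = 0 ∧ n % p ^ Nat.log p n = 0) :
    sp p m n =
      (let q := p ^ Nat.log p n
      List.replicate m ((n / q * q : ℕ) : ℤ)
        ++ List.replicate (n / q * q - m) (0 : ℤ)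
        ++ negRev (List.replicate m ((n / q * q : ℕ) : ℤ))) := by
  rw [sp, spAux]
  simp only [if_neg hm, if_neg h1, if_neg h2, if_neg h3, if_neg h4, if_pos h5]

/-- Case 6 unfolding. -/
lemma sp_case6 (hp : 2 ≤ p) (hm : m ≠ 0)
    (h1 : ¬ p ^ (Nat.log p n + 1) < m + n)
    (h2 : ¬ p ^ Nat.log p n < m % p ^ Nat.log p n + n % p ^ Nat.log p n)
    (h3 : ¬ (1 ≤ m % p ^ Nat.log p n + n % p ^ Nat.log p n ∧ 0 < m / p ^ Nat.log p n))
    (h4 : ¬ (m / p ^ Nat.log p n = 0 ∧ 0 < n % p ^ Nat.log p n))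
    (h5 : ¬ (m / p ^ Nat.log p n = 0 ∧ n % p ^ Nat.log p n = 0)) :
    sp p m n =
      (let q := p ^ Nat.log p n
      List.replicate q (((m / q + n / q - 1) * q : ℕ) : ℤ)
        ++ sp p ((m / q - 1) * q) ((n / q - 1) * q)
        ++ negRev (List.replicate q (((m / q + n / q - 1) * q : ℕ) : ℤ))) := by
  rw [sp, spAux]
  simp only [if_neg hm, if_neg h1, if_neg h2, if_neg h3, if_neg h4, if_neg h5]
  have hq : 0 < p ^ Nat.log p n := Nat.pow_pos (by omega)
  set q := p ^ Nat.log p n with hqdef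
  have hd1 : q * (m / q) + m % q = m := Nat.div_add_mod m q
  have hd2 : q * (n / q) + n % q = n := Nat.div_add_mod n q
  have ha : m / q ≠ 0 := by
    rintro h0
    rcases Nat.eq_zero_or_pos (n % q) with hd0 | hd0
    · exact h5 ⟨h0, hd0⟩
    · exact h4 ⟨h0, hd0⟩
  have e : (m / q - 1) * q = q * (m / q) - q := by
    rw [Nat.sub_mul, one_mul, Nat.mul_comm]
  have e2 : (n / q - 1) * q = q * (n / q) - q := by
    rw [Nat.sub_mul, one_mul, Nat.mul_comm]
  have ha2 : q ≤ q * (m / q) := Nat.le_mul_of_pos_right q (Nat.pos_of_ne_zero ha)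
  rw [spAux_eq_sp p hp _ _ _ (by omega)]

end Cases

lemma sp_zero (p n : ℕ) : sp p 0 n = List.replicate n 0 := by
  rw [sp, spAux]; simp

lemma mem_negRev {x : ℤ} {l : List ℤ} : x ∈ negRev l ↔ ∃ y ∈ l, x = -y := by
  simp only [negRev, List.mem_map, List.mem_reverse]
  constructor
  · rintro ⟨y, hy, rfl⟩; exact ⟨y, hy, rfl⟩
  · rintro ⟨y, hy, rfl⟩; exact ⟨y, hy, rfl⟩

/-- The structure lemma: for `m ≤ n`, `sp p m n` consists of a block `l` of `m`
entries lying strictly between `n-m` and `n+m`, then `n-m` zeros, then `negRev l`. -/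
lemma sp_structure (p : ℕ) (hp : 2 ≤ p) :
    ∀ N, ∀ m n, 2 * m + n ≤ N → m ≤ n →
      ∃ l : List ℤ, l.length = m ∧ (∀ x ∈ l, (n : ℤ) - m < x ∧ x < (n : ℤ) + m) ∧
        sp p m n = l ++ List.replicate (n - m) 0 ++ negRev l := by
  intro N
  induction N using Nat.strong_induction_on with
  | _ N IH =>
    intro m n hN hmn
    rcases Nat.eq_zero_or_pos m with rfl | hm1
    · exact ⟨[], rfl, by simp, by simp [sp_zero, negRev]⟩
    have hm : m ≠ 0 := by omega
    have hn1 : 1 ≤ n := le_trans hm1 hmn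
    have hq : 0 < p ^ Nat.log p n := Nat.pow_pos (by omega)
    set q := p ^ Nat.log p n with hqdef
    have hd1 : q * (m / q) + m % q = m := Nat.div_add_mod m q
    have hd2 : q * (n / q) + n % q = n := Nat.div_add_mod n q
    have hcq : m % q < q := Nat.mod_lt _ hq
    have hdq : n % q < q := Nat.mod_lt _ hq
    have hqn : q ≤ n := Nat.pow_log_le_self p (by omega)
    have hnP : n < p ^ (Nat.log p n + 1) := Nat.lt_pow_succ_log_self (by omega) n
    have hPq : p ^ (Nat.log p n + 1) = q * p := pow_succ p _
    have hP2 : 2 * q ≤ p ^ (Nat.log p n + 1) := by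
      rw [hPq]; calc 2 * q = q * 2 := by ring
        _ ≤ q * p := Nat.mul_le_mul_left q hp
    by_cases h1 : p ^ (Nat.log p n + 1) < m + n
    · -- Case 1
      set P := p ^ (Nat.log p n + 1) with hPdef
      obtain ⟨l', hlen', hbd', hstr'⟩ := IH (2 * (P - n) + (P - m)) (by omega)
        (P - n) (P - m) le_rfl (by omega)
      refine ⟨List.replicate (m + n - P) ((P : ℕ) : ℤ) ++ l', ?_, ?_, ?_⟩
      · simp [hlen']; omega
      · intro x hx
        rcases List.mem_append.1 hx with hx | hx
        · rw [List.eq_of_mem_replicate hx]; constructor <;> omega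
        · have := hbd' x hx; constructor <;> omega
      · have ez2 : P - m - (P - n) = n - m := by omega
        rw [sp_case1 p m n hp hm h1, ← hPdef, hstr', ez2, negRev_append]
        simp only [List.append_assoc]
    by_cases h2 : q < m % q + n % q
    · -- Case 2
      set S := (m / q + n / q + 1) * q with hSdef
      have eS : S = q * (m / q) + q * (n / q) + q := by rw [hSdef]; ring
      obtain ⟨l', hlen', hbd', hstr'⟩ := IH (2 * (S - n) + (S - m)) (by omega)
        (S - n) (S - m) le_rfl (by omega)
      refine ⟨List.replicate (m % q + n % q - q) ((S : ℕ) : ℤ) ++ l', ?_, ?_, ?_⟩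
      · simp [hlen']; omega
      · intro x hx
        rcases List.mem_append.1 hx with hx | hx
        · rw [List.eq_of_mem_replicate hx]; constructor <;> omega
        · have := hbd' x hx; constructor <;> omega
      · have ez2 : S - m - (S - n) = n - m := by omega
        rw [sp_case2 p m n hp hm h1 h2]
        simp only [← hqdef]
        rw [← hSdef, hstr', ez2, negRev_append]
        simp only [List.append_assoc]
    by_cases h3 : 1 ≤ m % q + n % q ∧ 0 < m / q
    · -- Case 3
      set S := (m / q + n / q) * q with hSdef
      have eS : S = q * (m / q) + q * (n / q) := by rw [hSdef]; ring
      have hA : q ≤ q * (m / q) := Nat.le_mul_of_pos_right q h3.2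
      have hB : q ≤ q * (n / q) := Nat.le_mul_of_pos_right q (Nat.div_pos hqn hq)
      set μ := min (m % q) (n % q) with hμ
      set M := max (m % q) (n % q) with hM
      have hμM : μ ≤ M := min_le_max
      have hμMs : μ + M = m % q + n % q := min_add_max _ _
      obtain ⟨lm, hlenm, hbdm, hstrm⟩ := IH (2 * μ + M) (by omega) μ M le_rfl hμM
      obtain ⟨l', hlen', hbd', hstr'⟩ := IH (2 * (S - n) + (S - m)) (by omega)
        (S - n) (S - m) le_rfl (by omega)
      refine ⟨(sp p μ M).map (fun x => x + ((S : ℕ) : ℤ)) ++ l', ?_, ?_, ?_⟩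
      · have : (sp p μ M).length = μ + (M - μ) + μ := by
          rw [hstrm]; simp [hlenm, negRev_length]; omega
        simp [this, hlen']; omega
      · intro x hx
        rcases List.mem_append.1 hx with hx | hx
        · obtain ⟨y, hy, rfl⟩ := List.mem_map.1 hx
          rw [hstrm] at hy
          rcases List.mem_append.1 hy with hy | hy
          · rcases List.mem_append.1 hy with hy | hy
            · have := hbdm y hy; constructor <;> omega
            · rw [List.eq_of_mem_replicate hy]; constructor <;> omega
          · obtain ⟨z, hz, rfl⟩ := mem_negRev.1 hy
            have := hbdm z hz; constructor <;> omega
        · have := hbd' x hx; constructor <;> omega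
      · have ez2 : S - m - (S - n) = n - m := by omega
        rw [sp_case3 p m n hp hm h1 h2 h3]
        simp only [← hqdef]
        rw [← hSdef, ← hμ, ← hM, hstr', ez2, negRev_append]
        simp only [List.append_assoc]
    by_cases h4 : m / q = 0 ∧ 0 < n % q
    · -- Case 4
      have hmq : m % q = m := by rw [← hd1, h4.1]; simp
      have hbq : 1 ≤ n / q := Nat.div_pos hqn hq
      have hB : q ≤ q * (n / q) := Nat.le_mul_of_pos_right q hbq
      have eB : n / q * q = q * (n / q) := by ring
      have e2B : 2 * (n / q) * q = 2 * (q * (n / q)) := by ring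
      set Nn := n / q * q - n % q with hNn
      obtain ⟨lm, hlenm, hbdm, hstrm⟩ := IH (2 * m + Nn) (by omega) m Nn le_rfl (by omega)
      have hfilter : (sp p m Nn).filter (fun x => decide (x < 0)) = negRev lm := by
        rw [hstrm]
        rw [List.filter_append, List.filter_append]
        have e1 : lm.filter (fun x => decide (x < 0)) = [] := by
          rw [List.filter_eq_nil_iff]
          intro x hx
          have := hbdm x hx
          simp only [decide_eq_true_eq]
          omega
        have e2 : (List.replicate (Nn - m) (0:ℤ)).filter (fun x => decide (x < 0)) = [] := by
          rw [List.filter_eq_nil_iff]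
          intro x hx
          rw [List.eq_of_mem_replicate hx]
          simp
        have e3 : (negRev lm).filter (fun x => decide (x < 0)) = negRev lm := by
          rw [List.filter_eq_self]
          intro x hx
          obtain ⟨z, hz, rfl⟩ := mem_negRev.1 hx
          have := hbdm z hz
          simp only [decide_eq_true_eq]
          omega
        rw [e1, e2, e3]; simp
      refine ⟨((sp p m Nn).filter (fun x => decide (x < 0))).map
          (fun x => x + ((2 * (n / q) * q : ℕ) : ℤ)), ?_, ?_, ?_⟩
      · simp [hfilter, negRev_length, hlenm]
      · intro x hx
        obtain ⟨y, hy, rfl⟩ := List.mem_map.1 hx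
        rw [hfilter] at hy
        obtain ⟨z, hz, rfl⟩ := mem_negRev.1 hy
        have := hbdm z hz
        constructor <;> omega
      · rw [sp_case4 p m n hp hm h1 h2 h3 h4]
    by_cases h5 : m / q = 0 ∧ n % q = 0
    · -- Case 5
      have hmq : m % q = m := by rw [← hd1, h5.1]; simp
      have eB : n / q * q = q * (n / q) := by ring
      have hnB : n / q * q = n := by rw [eB]; omega
      refine ⟨List.replicate m ((n / q * q : ℕ) : ℤ), ?_, ?_, ?_⟩
      · simp
      · intro x hx
        rw [List.eq_of_mem_replicate hx]
        constructor <;> omega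
      · rw [sp_case5 p m n hm h1 h2 h3 h4 h5]
        simp only [← hqdef]
        rw [hnB]
    · -- Case 6
      have ha : m / q ≠ 0 := by
        rintro h0
        rcases Nat.eq_zero_or_pos (n % q) with hd0 | hd0
        · exact h5 ⟨h0, hd0⟩
        · exact h4 ⟨h0, hd0⟩
      have hcd0 : m % q + n % q = 0 := by
        by_contra hne
        exact h3 ⟨by omega, Nat.pos_of_ne_zero ha⟩
      have hA : q ≤ q * (m / q) := Nat.le_mul_of_pos_right q (Nat.pos_of_ne_zero ha)
      have hab : m / q ≤ n / q := Nat.div_le_div_right hmn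
      have e : (m / q - 1) * q = q * (m / q) - q := by
        rw [Nat.sub_mul, one_mul, Nat.mul_comm]
      have e2 : (n / q - 1) * q = q * (n / q) - q := by
        rw [Nat.sub_mul, one_mul, Nat.mul_comm]
      have e3 : (m / q + n / q - 1) * q = q * (m / q) + q * (n / q) - q := by
        rw [Nat.sub_mul, one_mul, Nat.add_mul, Nat.mul_comm q, Nat.mul_comm q]
      obtain ⟨l', hlen', hbd', hstr'⟩ := IH (2 * ((m / q - 1) * q) + (n / q - 1) * q)
        (by omega) ((m / q - 1) * q) ((n / q - 1) * q) le_rfl (by omega)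
      refine ⟨List.replicate q (((m / q + n / q - 1) * q : ℕ) : ℤ) ++ l', ?_, ?_, ?_⟩
      · simp [hlen']; omega
      · intro x hx
        rcases List.mem_append.1 hx with hx | hx
        · rw [List.eq_of_mem_replicate hx]; constructor <;> omega
        · have := hbd' x hx; constructor <;> omega
      · have ez2 : (n / q - 1) * q - (m / q - 1) * q = n - m := by omega
        rw [sp_case6 p m n hp hm h1 h2 h3 h4 h5]
        simp only [← hqdef]
        rw [hstr', ez2, negRev_append]
        simp only [List.append_assoc]

/-- The target "standard" list. -/
def stdL (m n : ℕ) : List ℤ :=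
  (List.range m).map (fun i => (m : ℤ) + (n : ℤ) - 2 * ((i : ℤ) + 1) + 1)

lemma isStandard_iff (p m n : ℕ) : IsStandard p m n ↔ jordanPartition p m n = stdL m n :=
  Iff.rfl

lemma flatMap_single (l : List ℕ) :
    (l.flatMap fun (a : ℕ) => ([((a : ℕ) : ℤ)] : List ℤ)) = l.map (fun (a : ℕ) => ((a : ℕ) : ℤ)) := by
  induction l with
  | nil => rfl
  | cons x xs ih => simp [ih]

lemma stdL_eq (m n : ℕ) :
    stdL m n = (List.range m).map (fun i : ℕ => (m : ℤ) + (n : ℤ) - 2 * (((i : ℕ) : ℤ) + 1) + 1) := by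
  unfold stdL
  simp only [List.pure_def, List.bind_eq_flatMap]
  rw [flatMap_single, List.map_map]
  rfl

lemma isStandard_zero (p k : ℕ) : IsStandard p 0 k := by
  simp [IsStandard, jordanPartition, List.range_zero]

lemma stdL_cons (m n : ℕ) (hn : 1 ≤ n) :
    stdL (m + 1) n = ((m : ℤ) + n) :: stdL m (n - 1) := by
  rw [stdL_eq, stdL_eq, List.range_succ_eq_map, List.map_cons, List.map_map]
  congr 1
  · push_cast; ring
  · apply List.map_congr_left
    intro i _
    have hc : ((n - 1 : ℕ) : ℤ) = (n : ℤ) - 1 := by omega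
    simp only [Function.comp_apply, hc]
    push_cast
    ring

lemma sp_length (p : ℕ) (hp : 2 ≤ p) (m n : ℕ) (hmn : m ≤ n) :
    (sp p m n).length = m + n := by
  obtain ⟨l, hlen, -, hstr⟩ := sp_structure p hp (2 * m + n) m n le_rfl hmn
  rw [hstr]
  simp [hlen, negRev_length]
  omega

lemma negRev_negRev (l : List ℤ) : negRev (negRev l) = l := by
  simp [negRev, List.map_reverse, List.map_map]

lemma jp_of_eq (p m n : ℕ) (l rest : List ℤ) (h : sp p m n = l ++ rest)
    (hl : l.length = m) : jordanPartition p m n = l := by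
  rw [jordanPartition, h, ← hl, List.take_left]

lemma jp_cons (p : ℕ) (hp : 2 ≤ p) (m n : ℕ) (hm : 1 ≤ m) (hmn : m ≤ n) (x : ℤ)
    (rest : List ℤ) (hsp : sp p m n = x :: (sp p (m - 1) (n - 1) ++ rest)) :
    jordanPartition p m n = x :: jordanPartition p (m - 1) (n - 1) := by
  rw [jordanPartition, hsp]
  rw [show m = (m - 1) + 1 by omega, List.take_succ_cons,
    List.take_append_of_le_length (by rw [sp_length p hp _ _ (by omega)]; omega)]
  rfl

/-- The key "one new head, then recurse" criterion. -/
lemma isStandard_cons (p : ℕ) (hp : 2 ≤ p) (m n : ℕ) (hm : 1 ≤ m) (hmn : m ≤ n) (x : ℤ)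
    (rest : List ℤ) (hsp : sp p m n = x :: (sp p (m - 1) (n - 1) ++ rest)) :
    IsStandard p m n ↔ (x = (m : ℤ) + n - 1 ∧ IsStandard p (m - 1) (n - 1)) := by
  rw [isStandard_iff, isStandard_iff, jp_cons p hp m n hm hmn x rest hsp]
  rw [show m = (m - 1) + 1 by omega] at hmn ⊢
  rw [stdL_cons _ _ (by omega)]
  simp only [Nat.add_sub_cancel, List.cons.injEq]
  constructor
  · rintro ⟨h1, h2⟩
    refine ⟨by rw [h1]; push_cast; ring, h2⟩
  · rintro ⟨h1, h2⟩
    refine ⟨by rw [h1]; push_cast; ring, h2⟩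

/-- Refutation when the sequence starts with two equal terms. -/
lemma not_isStandard_two (p m n : ℕ) (hm : 2 ≤ m) (hn : 2 ≤ n) (v : ℤ) (t : List ℤ)
    (hsp : sp p m n = v :: v :: t) : ¬ IsStandard p m n := by
  intro h
  rw [isStandard_iff, jordanPartition, hsp] at h
  rw [show m = (m - 2) + 1 + 1 by omega, List.take_succ_cons, List.take_succ_cons] at h
  rw [show (m - 2) + 1 + 1 = m by omega] at h
  rw [show m = (m - 2) + 1 + 1 by omega, stdL_cons _ _ (by omega), stdL_cons _ _ (by omega)] at h
  simp only [List.cons.injEq] at h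
  obtain ⟨h1, h2, -⟩ := h
  rw [h1] at h2
  have : ((m - 2 + 1 + 1 : ℕ) : ℤ) = (m : ℤ) := by omega
  omega

/-- map/negRev of a standard list is standard. -/
lemma negRev_stdL_map (m N n : ℕ) (C : ℤ) (hC : C = (n : ℤ) + N) (hmN : m ≤ N)
    (hmn : m ≤ n) :
    (negRev (stdL m N)).map (fun x => x + C) = stdL m n := by
  rw [stdL_eq, stdL_eq]
  apply List.ext_getElem
  · simp [negRev]
  · intro i h1 h2
    have hi : i < m := by simpa using h2
    simp only [negRev, List.getElem_map, List.getElem_reverse, List.length_map,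
      List.length_range, List.getElem_range]
    have hc : ((m - 1 - i : ℕ) : ℤ) = (m : ℤ) - 1 - i := by omega
    rw [hc, hC]
    ring

lemma negRev_map_inj (C : ℤ) (l1 l2 : List ℤ)
    (h : (negRev l1).map (fun x => x + C) = (negRev l2).map (fun x => x + C)) : l1 = l2 := by
  have h2 : negRev l1 = negRev l2 := by
    have : Function.Injective (fun x : ℤ => x + C) := fun a b hab => by simpa using hab
    exact List.map_injective_iff.2 this h
  have := congrArg negRev h2
  rwa [negRev_negRev, negRev_negRev] at this

section Pchar

/-- Abbreviation for the right-hand side of Barry's theorem. -/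
def BarryS (p m n : ℕ) : Prop :=
  (1 ≤ m ∧ m ≤ n ∧ n ≤ p + 1 - m) ∨
    (∃ b d : ℕ, 1 ≤ b ∧ 1 ≤ m ∧ m ≤ (p + 1) / 2 ∧ m - 1 ≤ d ∧ d ≤ p + 1 - m ∧
      n = b * p + d)

lemma barryS_lt (p m n : ℕ) (hm : 1 ≤ m) (hn : n < p) :
    BarryS p m n ↔ (m ≤ n ∧ n ≤ p + 1 - m) := by
  constructor
  · rintro (⟨-, h⟩ | ⟨b, d, hb, -, -, -, -, rfl⟩)
    · exact h
    · have hbp : p ≤ b * p := Nat.le_mul_of_pos_left p hb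
      omega
  · intro h
    exact Or.inl ⟨hm, h⟩

lemma barryS_ge (p m n : ℕ) (hp : 2 ≤ p) (hm : 1 ≤ m) (hmp : m < p) (hn : p ≤ n) :
    BarryS p m n ↔ (m ≤ (p + 1) / 2 ∧ m - 1 ≤ n % p ∧ n % p ≤ p + 1 - m) := by
  constructor
  · rintro (⟨-, h1, h2⟩ | ⟨b, d, hb, -, h2, h3, h4, rfl⟩)
    · -- n = p, m = 1
      have hmn : m = 1 := by omega
      have hnp : n = p := by omega
      rw [hnp, Nat.mod_self, hmn]
      omega
    · rcases Nat.lt_or_ge d p with hd | hd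
      · have e2 : (b * p + d) % p = d := by
          rw [show b * p + d = p * b + d by ring, Nat.mul_add_mod, Nat.mod_eq_of_lt hd]
        omega
      · -- d = p, m = 1
        have hd' : d = p := by omega
        have hm1 : m = 1 := by omega
        have e2 : (b * p + d) % p = 0 := by
          rw [show b * p + d = p * (b + 1) by rw [hd']; ring, Nat.mul_mod_right]
        rw [e2, hm1]
        omega
  · rintro ⟨h1, h2, h3⟩
    right
    refine ⟨n / p, n % p, ?_, hm, h1, h2, h3, ?_⟩
    · exact (Nat.one_le_div_iff (by omega)).2 hn
    · have := Nat.div_add_mod n p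
      have e : n / p * p = p * (n / p) := by ring
      omega

end Pchar

/-- The main induction. -/
lemma main_iff (p : ℕ) (hp : 2 ≤ p) (hodd : Odd p) :
    ∀ N m n, 2 * m + n ≤ N → 1 ≤ m → m < p → m ≤ n →
      (IsStandard p m n ↔ BarryS p m n) := by
  obtain ⟨j, hj⟩ := hodd
  intro N
  induction N using Nat.strong_induction_on with
  | _ N IH =>
  intro m n hN hm hmp hmn
  have hn1 : 1 ≤ n := le_trans hm hmn
  by_cases hnp : n < p
  · -- Regime 1 : n < p, so log = 0
    have hlog : Nat.log p n = 0 := Nat.log_eq_zero_iff.2 (Or.inl hnp)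
    have hq1 : p ^ Nat.log p n = 1 := by rw [hlog, pow_zero]
    have hP : p ^ (Nat.log p n + 1) = p := by rw [hlog, pow_one]
    by_cases h1 : p ^ (Nat.log p n + 1) < m + n
    · -- Case 1 with k = 0
      have hpmn : p < m + n := by omega
      have hlm : m + n - p ≤ m - 1 := by omega
      have hm2 : 2 ≤ m := by omega
      have hsp := sp_case1 p m n hp (by omega) h1
      rw [hP] at hsp
      obtain ⟨L, hL⟩ : ∃ L, m + n - p = L := ⟨_, rfl⟩
      rw [hL] at hsp
      by_cases hl : L = 1
      · -- single new head
        rw [hl, show p - n = m - 1 by omega, show p - m = n - 1 by omega] at hsp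
        have hsp' : sp p m n = ((p : ℕ) : ℤ) ::
            (sp p (m - 1) (n - 1) ++ negRev (List.replicate 1 ((p : ℕ) : ℤ))) := by
          rw [hsp]
          simp only [List.replicate_one, List.singleton_append, List.cons_append,
            List.append_assoc, List.nil_append]
        rw [isStandard_cons p hp m n hm hmn _ _ hsp',
          IH (2 * (m - 1) + (n - 1)) (by omega) (m - 1) (n - 1) le_rfl (by omega)
            (by omega) (by omega),
          barryS_lt p m n hm hnp, barryS_lt p (m - 1) (n - 1) (by omega) (by omega)]
        omega
      · -- at least two equal heads : not standard
        have e : List.replicate L ((p : ℕ) : ℤ) =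
            ((p : ℕ) : ℤ) :: ((p : ℕ) : ℤ) :: List.replicate (L - 2) ((p : ℕ) : ℤ) := by
          conv_lhs => rw [show L = L - 2 + 1 + 1 by omega]
          rw [List.replicate_succ, List.replicate_succ]
        rw [e] at hsp
        have hsp' : sp p m n = ((p : ℕ) : ℤ) :: ((p : ℕ) : ℤ) ::
            (List.replicate (L - 2) ((p : ℕ) : ℤ) ++
              (sp p (p - n) (p - m) ++ negRev (((p : ℕ) : ℤ) :: ((p : ℕ) : ℤ) ::
                List.replicate (L - 2) ((p : ℕ) : ℤ)))) := by
          rw [hsp]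
          simp only [List.cons_append, List.append_assoc]
        rw [barryS_lt p m n hm hnp]
        exact iff_of_false (not_isStandard_two p m n (by omega) (by omega) _ _ hsp') (by omega)
    · -- Case 6 with k = 0 : m + n ≤ p
      have h2 : ¬ p ^ Nat.log p n < m % p ^ Nat.log p n + n % p ^ Nat.log p n := by
        rw [hq1, Nat.mod_one, Nat.mod_one]; omega
      have h3 : ¬ (1 ≤ m % p ^ Nat.log p n + n % p ^ Nat.log p n ∧
          0 < m / p ^ Nat.log p n) := by
        rw [hq1, Nat.mod_one, Nat.mod_one]; omega
      have h4 : ¬ (m / p ^ Nat.log p n = 0 ∧ 0 < n % p ^ Nat.log p n) := by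
        rw [hq1, Nat.mod_one, Nat.div_one]; omega
      have h5 : ¬ (m / p ^ Nat.log p n = 0 ∧ n % p ^ Nat.log p n = 0) := by
        rw [hq1, Nat.div_one]; omega
      have hsp := sp_case6 p m n hp (by omega) h1 h2 h3 h4 h5
      simp only [hq1, Nat.div_one, Nat.mul_one] at hsp
      rw [show m + n - 1 = (m - 1) + (n - 1) + 1 by omega] at hsp
      have hsp' : sp p m n = (((m - 1) + (n - 1) + 1 : ℕ) : ℤ) ::
          (sp p (m - 1) (n - 1) ++
            negRev (List.replicate 1 (((m - 1) + (n - 1) + 1 : ℕ) : ℤ))) := by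
        rw [hsp]
        simp only [List.replicate_one, List.singleton_append, List.cons_append,
          List.append_assoc, List.nil_append]
      rw [isStandard_cons p hp m n hm hmn _ _ hsp']
      rcases Nat.lt_or_ge m 2 with hm2 | hm2
      · -- m = 1
        have hstd0 : IsStandard p (m - 1) (n - 1) := by
          rw [show m - 1 = 0 by omega]; exact isStandard_zero p (n - 1)
        rw [barryS_lt p m n hm hnp]
        exact iff_of_true ⟨by omega, hstd0⟩ (by omega)
      · rw [IH (2 * (m - 1) + (n - 1)) (by omega) (m - 1) (n - 1) le_rfl (by omega)
            (by omega) (by omega),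
          barryS_lt p m n hm hnp, barryS_lt p (m - 1) (n - 1) (by omega) (by omega)]
        omega
  · -- Regime 2 : p ≤ n
    push_neg at hnp
    have hK : 1 ≤ Nat.log p n := Nat.log_pos (by omega) hnp
    have hqn' : p ^ Nat.log p n ≤ n := Nat.pow_log_le_self p (by omega)
    have hnP' : n < p ^ (Nat.log p n + 1) := Nat.lt_pow_succ_log_self (by omega) n
    have hqm' : m < p ^ Nat.log p n := by
      calc m < p := hmp
      _ = p ^ 1 := (pow_one p).symm
      _ ≤ p ^ Nat.log p n := Nat.pow_le_pow_right (by omega) hK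
    have ha0 : m / p ^ Nat.log p n = 0 := Nat.div_eq_of_lt hqm'
    have hc : m % p ^ Nat.log p n = m := Nat.mod_eq_of_lt hqm'
    obtain ⟨t, ht⟩ : ∃ t, p ^ (Nat.log p n - 1) = t := ⟨_, rfl⟩
    have ht1 : 1 ≤ t := by rw [← ht]; exact Nat.one_le_pow _ _ (by omega)
    have hqt : p ^ Nat.log p n = p * t := by
      rw [← ht, ← pow_succ']; congr 1; omega
    have hPq : p ^ (Nat.log p n + 1) = p * t * p := by rw [pow_succ, hqt]
    obtain ⟨b, hb⟩ : ∃ b, n / p ^ Nat.log p n = b := ⟨_, rfl⟩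
    obtain ⟨d, hd⟩ : ∃ d, n % p ^ Nat.log p n = d := ⟨_, rfl⟩
    have hd2 : p * t * b + d = n := by
      have := Nat.div_add_mod n (p ^ Nat.log p n)
      rwa [hb, hd, hqt] at this
    have hdq : d < p * t := by rw [← hd, ← hqt]; exact Nat.mod_lt _ (by omega)
    have hqm : m < p * t := by rwa [hqt] at hqm'
    have hqn : p * t ≤ n := by rwa [hqt] at hqn'
    have hnP : n < p * t * p := by rwa [hPq] at hnP'
    have hb1 : 1 ≤ b := by rw [← hb]; exact Nat.div_pos hqn' (by omega)
    have etb : p * t * b = p * (t * b) := by ring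
    have hBt : p * t ≤ p * (t * b) :=
      Nat.mul_le_mul_left p (Nat.le_mul_of_pos_right t hb1)
    have hmodn : n % p = d % p := by
      rw [show n = p * (t * b) + d by omega, Nat.mul_add_mod]
    have hPp : p * p ≤ p * t * p :=
      Nat.mul_le_mul_right p (Nat.le_mul_of_pos_right p ht1)
    have hpt : p ≤ p * t := Nat.le_mul_of_pos_right p ht1
    have hpp : 2 * p ≤ p * p := Nat.mul_le_mul_right p hp
    have htpp : p ≤ t * p := Nat.le_mul_of_pos_left p ht1
    have hppt : p * p ≤ p * (t * p) := Nat.mul_le_mul_left p htpp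
    have hptt : 2 * (p * t) ≤ p * t * p := by
      calc 2 * (p * t) = p * t * 2 := by ring
      _ ≤ p * t * p := Nat.mul_le_mul_left (p * t) hp
    have htb1 : 1 ≤ t * b := Nat.mul_pos ht1 hb1
    have htp1 : 1 ≤ t * p := Nat.mul_pos ht1 (by omega)
    have hptp1 : p ≤ p * (t * p) := Nat.le_mul_of_pos_right p htp1
    have hptb1 : p ≤ p * (t * b) := Nat.le_mul_of_pos_right p htb1
    have etp1 : p * (t * p - 1) = p * (t * p) - p := by
      rw [Nat.mul_sub, Nat.mul_one]
    have etpp : p * t * p = p * (t * p) := by ring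
    have et1 : p * (t - 1) = p * t - p := by rw [Nat.mul_sub, Nat.mul_one]
    by_cases h1 : p ^ (Nat.log p n + 1) < m + n
    · -- Case A (recursion case 1)
      have hsp := sp_case1 p m n hp (by omega) h1
      rw [hPq] at hsp h1
      obtain ⟨L, hL⟩ : ∃ L, m + n - p * t * p = L := ⟨_, rfl⟩
      rw [hL] at hsp
      have hlm : L ≤ m - 1 := by omega
      have hm2 : 2 ≤ m := by omega
      by_cases hl : L = 1
      · rw [hl, show p * t * p - n = m - 1 by omega,
          show p * t * p - m = n - 1 by omega] at hsp
        have hsp' : sp p m n = ((p * t * p : ℕ) : ℤ) ::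
            (sp p (m - 1) (n - 1) ++ negRev (List.replicate 1 ((p * t * p : ℕ) : ℤ))) := by
          rw [hsp]
          simp only [List.replicate_one, List.singleton_append, List.cons_append,
            List.append_assoc, List.nil_append]
        have hnmod : n % p = p + 1 - m := by
          rw [show n = p * (t * p - 1) + (p + 1 - m) by omega, Nat.mul_add_mod,
            Nat.mod_eq_of_lt (by omega)]
        have hn1mod : (n - 1) % p = p - m := by
          rw [show n - 1 = p * (t * p - 1) + (p - m) by omega, Nat.mul_add_mod,
            Nat.mod_eq_of_lt (by omega)]
        rw [isStandard_cons p hp m n hm hmn _ _ hsp',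
          IH (2 * (m - 1) + (n - 1)) (by omega) (m - 1) (n - 1) le_rfl (by omega)
            (by omega) (by omega),
          barryS_ge p m n hp hm hmp (by omega),
          barryS_ge p (m - 1) (n - 1) hp (by omega) (by omega) (by omega),
          hnmod, hn1mod]
        omega
      · -- two equal heads
        have e : List.replicate L ((p * t * p : ℕ) : ℤ) =
            ((p * t * p : ℕ) : ℤ) :: ((p * t * p : ℕ) : ℤ) ::
              List.replicate (L - 2) ((p * t * p : ℕ) : ℤ) := by
          conv_lhs => rw [show L = L - 2 + 1 + 1 by omega]
          rw [List.replicate_succ, List.replicate_succ]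
        rw [e] at hsp
        have hsp' : sp p m n = ((p * t * p : ℕ) : ℤ) :: ((p * t * p : ℕ) : ℤ) ::
            (List.replicate (L - 2) ((p * t * p : ℕ) : ℤ) ++
              (sp p (p * t * p - n) (p * t * p - m) ++
                negRev (((p * t * p : ℕ) : ℤ) :: ((p * t * p : ℕ) : ℤ) ::
                  List.replicate (L - 2) ((p * t * p : ℕ) : ℤ)))) := by
          rw [hsp]
          simp only [List.cons_append, List.append_assoc]
        have hnmod : n % p = p + L - m := by
          rw [show n = p * (t * p - 1) + (p + L - m) by omega, Nat.mul_add_mod,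
            Nat.mod_eq_of_lt (by omega)]
        rw [barryS_ge p m n hp hm hmp (by omega), hnmod]
        exact iff_of_false (not_isStandard_two p m n (by omega) (by omega) _ _ hsp')
          (by omega)
    by_cases h2 : p ^ Nat.log p n < m % p ^ Nat.log p n + n % p ^ Nat.log p n
    · -- Case B (recursion case 2)
      have h2' : p * t < m + d := by rwa [hc, hd, hqt] at h2
      have hsp := sp_case2 p m n hp (by omega) h1 h2
      simp only [ha0, hc, hd, hb, Nat.zero_add] at hsp
      rw [hqt] at hsp
      obtain ⟨L, hL⟩ : ∃ L, m + d - p * t = L := ⟨_, rfl⟩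
      rw [hL] at hsp
      have heq : (b + 1) * (p * t) = p * t * b + p * t := by ring
      have hlm : L ≤ m - 1 := by omega
      have hm2 : 2 ≤ m := by omega
      by_cases hl : L = 1
      · rw [hl, show (b + 1) * (p * t) - n = m - 1 by omega,
          show (b + 1) * (p * t) - m = n - 1 by omega] at hsp
        have hsp' : sp p m n = (((b + 1) * (p * t) : ℕ) : ℤ) ::
            (sp p (m - 1) (n - 1) ++
              negRev (List.replicate 1 (((b + 1) * (p * t) : ℕ) : ℤ))) := by
          rw [hsp]
          simp only [List.replicate_one, List.singleton_append, List.cons_append,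
            List.append_assoc, List.nil_append]
        have hd1' : 2 ≤ d := by omega
        have hnmod : n % p = p + 1 - m := by
          rw [hmodn, show d = p * (t - 1) + (p + 1 - m) by omega, Nat.mul_add_mod,
            Nat.mod_eq_of_lt (by omega)]
        have etbt : p * (t * b + (t - 1)) = p * (t * b) + p * (t - 1) := Nat.mul_add p _ _
        have hn1mod : (n - 1) % p = p - m := by
          rw [show n - 1 = p * (t * b + (t - 1)) + (p - m) by omega, Nat.mul_add_mod,
            Nat.mod_eq_of_lt (by omega)]
        rw [isStandard_cons p hp m n hm hmn _ _ hsp',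
          IH (2 * (m - 1) + (n - 1)) (by omega) (m - 1) (n - 1) le_rfl (by omega)
            (by omega) (by omega),
          barryS_ge p m n hp hm hmp (by omega),
          barryS_ge p (m - 1) (n - 1) hp (by omega) (by omega) (by omega),
          hnmod, hn1mod]
        omega
      · -- two equal heads
        have e : List.replicate L (((b + 1) * (p * t) : ℕ) : ℤ) =
            (((b + 1) * (p * t) : ℕ) : ℤ) :: (((b + 1) * (p * t) : ℕ) : ℤ) ::
              List.replicate (L - 2) (((b + 1) * (p * t) : ℕ) : ℤ) := by
          conv_lhs => rw [show L = L - 2 + 1 + 1 by omega]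
          rw [List.replicate_succ, List.replicate_succ]
        rw [e] at hsp
        have hsp' : sp p m n = (((b + 1) * (p * t) : ℕ) : ℤ) ::
            (((b + 1) * (p * t) : ℕ) : ℤ) ::
            (List.replicate (L - 2) (((b + 1) * (p * t) : ℕ) : ℤ) ++
              (sp p ((b + 1) * (p * t) - n) ((b + 1) * (p * t) - m) ++
                negRev ((((b + 1) * (p * t) : ℕ) : ℤ) :: (((b + 1) * (p * t) : ℕ) : ℤ) ::
                  List.replicate (L - 2) (((b + 1) * (p * t) : ℕ) : ℤ)))) := by
          rw [hsp]
          simp only [List.cons_append, List.append_assoc]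
        have hnmod : n % p = p + L - m := by
          rw [hmodn, show d = p * (t - 1) + (p + L - m) by omega, Nat.mul_add_mod,
            Nat.mod_eq_of_lt (by omega)]
        rw [barryS_ge p m n hp hm hmp (by omega), hnmod]
        exact iff_of_false (not_isStandard_two p m n (by omega) (by omega) _ _ hsp')
          (by omega)
    have h2' : m + d ≤ p * t := by
      rw [hc, hd, hqt] at h2; omega
    have h3 : ¬ (1 ≤ m % p ^ Nat.log p n + n % p ^ Nat.log p n ∧
        0 < m / p ^ Nat.log p n) := by rw [ha0]; omega
    by_cases h4d : 0 < n % p ^ Nat.log p n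
    · -- Case C (recursion case 4) : reflection
      have hd0 : 0 < d := by rwa [hd] at h4d
      have hsp := sp_case4 p m n hp (by omega) h1 h2 h3 ⟨ha0, h4d⟩
      simp only [hb, hd] at hsp
      rw [hqt] at hsp
      -- hsp now mentions sp p m (b * (p * t) - d)
      have ebpt : b * (p * t) = p * (t * b) := by ring
      have hmN : m ≤ b * (p * t) - d := by omega
      have hNn : b * (p * t) - d < n := by omega
      obtain ⟨l, hlen, hbd, hstr⟩ := sp_structure p hp
        (2 * m + (b * (p * t) - d)) m (b * (p * t) - d) le_rfl hmN
      have hfilter : (sp p m (b * (p * t) - d)).filter (fun x => decide (x < 0)) =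
          negRev l := by
        rw [hstr, List.filter_append, List.filter_append]
        have e1 : l.filter (fun x => decide (x < 0)) = [] := by
          rw [List.filter_eq_nil_iff]
          intro x hx
          have := hbd x hx
          simp only [decide_eq_true_eq]
          omega
        have e2 : (List.replicate (b * (p * t) - d - m) (0 : ℤ)).filter
            (fun x => decide (x < 0)) = [] := by
          rw [List.filter_eq_nil_iff]
          intro x hx
          rw [List.eq_of_mem_replicate hx]
          simp
        have e3 : (negRev l).filter (fun x => decide (x < 0)) = negRev l := by
          rw [List.filter_eq_self]
          intro x hx
          obtain ⟨z, hz, rfl⟩ := mem_negRev.1 hx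
          have := hbd z hz
          simp only [decide_eq_true_eq]
          omega
        rw [e1, e2, e3]
        simp
      rw [hfilter] at hsp
      have hjp : jordanPartition p m n =
          (negRev l).map (fun x => x + ((2 * b * (p * t) : ℕ) : ℤ)) := by
        apply jp_of_eq p m n _ (List.replicate (n - m) 0 ++
          negRev ((negRev l).map (fun x => x + ((2 * b * (p * t) : ℕ) : ℤ))))
        · rw [hsp, List.append_assoc]
        · simp [negRev_length, hlen]
      have hjpN : jordanPartition p m (b * (p * t) - d) = l := by
        apply jp_of_eq p m _ _ (List.replicate (b * (p * t) - d - m) 0 ++ negRev l)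
        · rw [hstr, List.append_assoc]
        · exact hlen
      have he2q : 2 * b * (p * t) = p * (t * b) + p * (t * b) := by ring
      have hCeq : ((2 * b * (p * t) : ℕ) : ℤ) = (n : ℤ) +
          ((b * (p * t) - d : ℕ) : ℤ) := by omega
      have hT := negRev_stdL_map m (b * (p * t) - d) n
        ((2 * b * (p * t) : ℕ) : ℤ) hCeq hmN hmn
      have hiff : IsStandard p m n ↔ IsStandard p m (b * (p * t) - d) := by
        rw [isStandard_iff, isStandard_iff, hjp, hjpN]
        constructor
        · intro h
          exact negRev_map_inj _ _ _ (h.trans hT.symm)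
        · intro h
          rw [h]
          exact hT
      rw [hiff, IH (2 * m + (b * (p * t) - d)) (by omega) m _ le_rfl hm hmp hmN]
      -- now pure arithmetic : BarryS p m Nn ↔ BarryS p m n
      have hddm : p * (d / p) + d % p = d := Nat.div_add_mod d p
      have hdpp : d % p < p := Nat.mod_lt _ (by omega)
      have hdpl : d / p < t * b := by
        rw [Nat.div_lt_iff_lt_mul (by omega : 0 < p)]
        calc d < p * t := hdq
        _ ≤ p * (t * b) := hBt
        _ = t * b * p := by ring
      have hmul5 : p * (d / p + 1) ≤ p * (t * b) := Nat.mul_le_mul_left p (by omega)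
      have hmul6 : p * (d / p + 1) = p * (d / p) + p := by ring
      have hmul2 : p * (t * b - d / p) = p * (t * b) - p * (d / p) := Nat.mul_sub p _ _
      have hmul3 : p * (t * b - d / p - 1) = p * (t * b - d / p) - p := by
        rw [Nat.mul_sub, Nat.mul_one]
      have hmul4 : p * (t * b - 1) = p * (t * b) - p := by
        rw [Nat.mul_sub, Nat.mul_one]
      rcases Nat.lt_or_ge (b * (p * t) - d) p with hNp | hNp
      · -- Nn < p
        rw [barryS_lt p m _ hm hNp, barryS_ge p m n hp hm hmp (by omega), hmodn]
        obtain ⟨Nv, hNv⟩ : ∃ x, b * (p * t) - d = x := ⟨_, rfl⟩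
        have hdmod : d % p = p - (b * (p * t) - d) := by
          rw [hNv, show d = p * (t * b - 1) + (p - Nv) by omega,
            Nat.mul_add_mod, Nat.mod_eq_of_lt (by omega)]
        rw [hdmod]
        omega
      · -- Nn ≥ p
        rw [barryS_ge p m _ hp hm hmp hNp, barryS_ge p m n hp hm hmp (by omega), hmodn]
        rcases Nat.eq_zero_or_pos (d % p) with hr | hr
        · have hNmod : (b * (p * t) - d) % p = 0 := by
            rw [show b * (p * t) - d = p * (t * b - d / p) by omega]
            exact Nat.mul_mod_right p _
          rw [hNmod, hr]
        · have hNmod : (b * (p * t) - d) % p = p - d % p := by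
            rw [show b * (p * t) - d = p * (t * b - d / p - 1) + (p - d % p) by omega,
              Nat.mul_add_mod, Nat.mod_eq_of_lt (by omega)]
          rw [hNmod]
          omega
    · -- Case D (recursion case 5) : n is a multiple of q
      have hd0 : d = 0 := by rw [← hd]; omega
      have h4 : ¬ (m / p ^ Nat.log p n = 0 ∧ 0 < n % p ^ Nat.log p n) := by
        rintro ⟨-, hh⟩; omega
      have h5 : m / p ^ Nat.log p n = 0 ∧ n % p ^ Nat.log p n = 0 := ⟨ha0, by omega⟩
      have hsp := sp_case5 p m n (by omega) h1 h2 h3 h4 h5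
      simp only [hb, hd] at hsp
      rw [hqt] at hsp
      have ebpt : b * (p * t) = p * (t * b) := by ring
      have hnB : b * (p * t) - d = n - d := by omega
      rw [show b * (p * t) = n by omega] at hsp
      have hjp : jordanPartition p m n = List.replicate m ((n : ℕ) : ℤ) := by
        apply jp_of_eq p m n _ (List.replicate (n - m) 0 ++
          negRev (List.replicate m ((n : ℕ) : ℤ)))
        · rw [hsp, List.append_assoc]
        · simp
      have hnmod0 : n % p = 0 := by
        rw [hmodn, hd0, Nat.zero_mod]
      rcases Nat.lt_or_ge m 2 with hm1 | hm2
      · -- m = 1 : standard and in BarryS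
        have hm1' : m = 1 := by omega
        have hstd : IsStandard p m n := by
          rw [isStandard_iff, hjp, hm1', stdL_eq]
          rw [show (1 : ℕ) = 0 + 1 by rfl, List.range_succ, List.range_zero]
          simp only [List.nil_append, List.map_cons, List.map_nil, Nat.cast_zero]
          norm_num
          omega
        rw [barryS_ge p m n hp hm hmp (by omega), hnmod0]
        exact iff_of_true hstd (by omega)
      · -- m ≥ 2 : two equal heads, and not in BarryS
        have e : List.replicate m ((n : ℕ) : ℤ) = ((n : ℕ) : ℤ) :: ((n : ℕ) : ℤ) ::
            List.replicate (m - 2) ((n : ℕ) : ℤ) := by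
          conv_lhs => rw [show m = m - 2 + 1 + 1 by omega]
          rw [List.replicate_succ, List.replicate_succ]
        rw [e] at hsp
        have hsp' : sp p m n = ((n : ℕ) : ℤ) :: ((n : ℕ) : ℤ) ::
            (List.replicate (m - 2) ((n : ℕ) : ℤ) ++
              (List.replicate (n - m) 0 ++ negRev (((n : ℕ) : ℤ) :: ((n : ℕ) : ℤ) ::
                List.replicate (m - 2) ((n : ℕ) : ℤ)))) := by
          rw [hsp]
          simp only [List.cons_append, List.append_assoc]
        rw [barryS_ge p m n hp hm hmp (by omega), hnmod0]
        exact iff_of_false (not_isStandard_two p m n (by omega) (by omega) _ _ hsp') (by omega)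

end BarryAux


/-- **Theorem 1 (Barry).** Let `p` be an odd prime. Define `S = S₁ ∪ S₂`, where
`S₁ = {(k,d) : 1 ≤ k ≤ d ≤ p+1−k}` and
`S₂ = {(k, b·p+d) : b ≥ 1, 1 ≤ k ≤ (p+1)/2, k−1 ≤ d ≤ p+1−k}`.
If `1 ≤ m < p` and `n ≥ m`, then `λ(m,n,p)` is standard iff `(m,n) ∈ S`. -/
theorem jordanPartition_standard_iff_of_lt_prime (p : ℕ) (hp : Nat.Prime p) (hodd : Odd p)
    (m n : ℕ) (hm : 1 ≤ m) (hmp : m < p) (hmn : m ≤ n) :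
    IsStandard p m n ↔
      ((1 ≤ m ∧ m ≤ n ∧ n ≤ p + 1 - m) ∨
        (∃ b d : ℕ, 1 ≤ b ∧ 1 ≤ m ∧ m ≤ (p + 1) / 2 ∧ m - 1 ≤ d ∧ d ≤ p + 1 - m ∧
          n = b * p + d)) := by
  exact BarryAux.main_iff p hp.two_le hodd (2 * m + n) m n le_rfl hm hmp hmn
end

section
/- Let p be an odd prime. If 1 ≤ m ≤ n < p, then the Jordan partition λ(m,n,p) is standard if and only if m + n ≤ p + 1. -/
/-- The strictly-descending prefix `(m+n-1, m+n-3, …, n-m+1)`. -/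
def Dlist (m n : ℕ) : List ℤ := (List.range m).map (fun i : ℕ => (m : ℤ) + n - 1 - 2 * (i : ℤ))

lemma Dlist_length (m n : ℕ) : (Dlist m n).length = m := by simp [Dlist]

lemma Dlist_succ (m n : ℕ) :
    Dlist (m+1) (n+1) = ((m : ℤ) + n + 1) :: Dlist m n := by
  simp only [Dlist, List.range_succ_eq_map, List.map_cons, List.map_map]
  congr 1
  · push_cast; ring
  · refine List.map_congr_left (fun a _ => ?_)
    simp only [Function.comp_apply]; push_cast; ring

lemma negRev_cons (x : ℤ) (l : List ℤ) : negRev (x :: l) = negRev l ++ [-x] := by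
  simp [negRev]

/-- The standard sequence, rewritten as a map over `List.range` with a `ℕ`-valued
lambda (the original statement inserts a monadic coercion on the list). -/
lemma rhs_eq (m n : ℕ) :
    ((List.range m).map (fun i => (m : ℤ) + (n : ℤ) - 2 * ((i : ℤ) + 1) + 1)) =
    (List.range m).map (fun i : ℕ => (m : ℤ) + (n : ℤ) - 2 * (((i : ℕ) : ℤ) + 1) + 1) := by
  simp only [bind_pure_comp, List.map_eq_map, List.map_map]
  rfl

/-- Unfolding `spAux` one step in Case 6 (which is the case that applies
whenever `0 < m ≤ n` and `m + n ≤ p`, since then `k = 0`, `q = 1`,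
`a = m`, `b = n`, `c = d = 0`). -/
lemma spAux_step (p f m n : ℕ) (hm : m ≠ 0) (hn : n < p) (hsum : m + n ≤ p) :
    spAux p (f+1) m n = ((m + n - 1 : ℕ) : ℤ) :: (spAux p f (m-1) (n-1)
      ++ [-((m + n - 1 : ℕ) : ℤ)]) := by
  have hlog : Nat.log p n = 0 := Nat.log_eq_zero_iff.mpr (Or.inl hn)
  rw [spAux]
  simp only [hlog, zero_add, pow_zero, pow_one, Nat.div_one, Nat.mod_one, if_neg hm]
  rw [if_neg (by omega), if_neg (by omega), if_neg (by omega), if_neg (by omega),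
    if_neg (by omega)]
  simp [negRev, mul_one]

/-- Unfolding `spAux` one step in Case 1 (`k = 0`, `p < m + n`). -/
lemma spAux_step1 (p f m n : ℕ) (hm : m ≠ 0) (hn : n < p) (h : p < m + n) :
    spAux p (f+1) m n = List.replicate (m + n - p) ((p : ℕ) : ℤ) ++ spAux p f (p - n) (p - m)
      ++ negRev (List.replicate (m + n - p) ((p : ℕ) : ℤ)) := by
  have hlog : Nat.log p n = 0 := Nat.log_eq_zero_iff.mpr (Or.inl hn)
  rw [spAux]
  simp only [hlog, zero_add, pow_one, if_neg hm, if_pos h]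

/-- For `m ≤ n` with `m + n ≤ p`, the sequence `s_p(m,n)` is completely
explicit: the descending run, then zeros, then the negative reverse. -/
lemma spAux_eq (p : ℕ) :
    ∀ m fuel n, m < fuel → m ≤ n → m + n ≤ p →
      spAux p fuel m n = Dlist m n ++ List.replicate (n - m) 0 ++ negRev (Dlist m n) := by
  intro m
  induction m with
  | zero =>
    intro fuel n hf _ _
    obtain ⟨f, rfl⟩ := Nat.exists_eq_succ_of_ne_zero (by omega : fuel ≠ 0)
    simp [spAux, Dlist, negRev]
  | succ m ih =>
    intro fuel n hf hmn hsum
    obtain ⟨f, rfl⟩ := Nat.exists_eq_succ_of_ne_zero (by omega : fuel ≠ 0)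
    obtain ⟨n', rfl⟩ : ∃ n', n = n' + 1 := ⟨n - 1, by omega⟩
    rw [spAux_step p f (m+1) (n'+1) (by omega) (by omega) hsum]
    rw [show m + 1 - 1 = m from rfl, show n' + 1 - 1 = n' from rfl]
    rw [ih f n' (by omega) (by omega) (by omega)]
    rw [Dlist_succ, negRev_cons]
    have hcast : ((m + 1 + (n' + 1) - 1 : ℕ) : ℤ) = (m : ℤ) + n' + 1 := by omega
    rw [hcast, Nat.succ_sub_succ]
    simp [List.append_assoc]

lemma standard_of_le (p m n : ℕ) (hm : 1 ≤ m) (hmn : m ≤ n) (hsum : m + n ≤ p) :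
    IsStandard p m n := by
  unfold IsStandard jordanPartition sp
  rw [rhs_eq, spAux_eq p m (2*m+n+1) n (by omega) hmn hsum]
  rw [List.append_assoc, List.take_left' (Dlist_length m n)]
  apply List.ext_getElem (by simp [Dlist_length])
  intro i h1 h2
  simp only [Dlist, List.getElem_map, List.getElem_range]
  push_cast
  ring

lemma standard_of_eq (p m n : ℕ) (hm : 1 ≤ m) (hmn : m ≤ n) (hn : n < p)
    (hsum : m + n = p + 1) : IsStandard p m n := by
  unfold IsStandard jordanPartition sp
  rw [rhs_eq, spAux_step1 p (2*m+n) m n (by omega) hn (by omega)]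
  rw [show m + n - p = 1 by omega]
  rw [spAux_eq p (p - n) (2*m+n) (p - m) (by omega) (by omega) (by omega)]
  rw [show (1 : ℕ) = 0 + 1 from rfl, List.replicate_succ, List.replicate_zero]
  obtain ⟨m', rfl⟩ : ∃ m', m = m' + 1 := ⟨m - 1, by omega⟩
  simp only [List.nil_append, List.cons_append, List.take_succ_cons]
  simp only [List.append_assoc]
  rw [List.take_left' (l₁ := Dlist (p - n) (p - (m' + 1))) (by rw [Dlist_length]; omega)]
  rw [List.range_succ_eq_map, List.map_cons, List.map_map]
  congr 1
  · push_cast; omega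
  · apply List.ext_getElem (by simp [Dlist_length]; omega)
    intro i h1 h2
    simp only [Dlist, List.getElem_map, List.getElem_range, Function.comp_apply]
    push_cast
    omega

lemma not_standard_of_gt (p m n : ℕ) (hm : 1 ≤ m) (hn : n < p) (hsum : p + 2 ≤ m + n) :
    ¬ IsStandard p m n := by
  intro h
  unfold IsStandard jordanPartition sp at h
  rw [rhs_eq, spAux_step1 p (2*m+n) m n (by omega) hn (by omega)] at h
  obtain ⟨r, hr⟩ : ∃ r, m + n - p = r + 1 := ⟨m + n - p - 1, by omega⟩
  rw [hr, List.replicate_succ] at h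
  obtain ⟨m', rfl⟩ : ∃ m', m = m' + 1 := ⟨m - 1, by omega⟩
  rw [List.range_succ_eq_map, List.map_cons] at h
  simp only [List.cons_append, List.take_succ_cons, List.cons.injEq] at h
  have h0 := h.1
  push_cast at h0
  omega
/-- **Lemma 1 (Barry).** If `p` is an odd prime and `1 ≤ m ≤ n < p`, then
`λ(m,n,p)` is standard iff `m + n ≤ p + 1`. -/
theorem jordanPartition_standard_iff_of_lt (p : ℕ) (hp : Nat.Prime p) (hodd : Odd p)
    (m n : ℕ) (hm : 1 ≤ m) (hmn : m ≤ n) (hn : n < p) :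
    IsStandard p m n ↔ m + n ≤ p + 1 := by
  constructor
  · intro h
    by_contra hc
    exact not_standard_of_gt p m n hm hn (by omega) h
  · intro h
    rcases Nat.lt_or_ge (m + n) (p + 1) with h' | h'
    · exact standard_of_le p m n hm hmn (by omega)
    · exact standard_of_eq p m n hm hmn hn (by omega)
end

section
/- Let p be an odd prime, let t be a positive integer, and let x = (p^t ± 1)/2 and y = (p^t ± 1)/2 (with the two signs chosen independently, so each of x, y is (p^t−1)/2 or (p^t+1)/2). Suppose x ≤ y. Then for every integer i with 0 ≤ i ≤ (p−1)/2, the Jordan partition λ(i·p^t + x, i·p^t + y, p) is standard. -/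
/-- The full staircase sequence `(N-1, N-3, …, -(N-1))`. -/
def stair (N : ℕ) : List ℤ := (List.range N).map (fun j : ℕ => (N : ℤ) - 1 - 2 * (j : ℤ))

lemma spAux_case1 (p F m n K : ℕ) (hm : m ≠ 0) (hK : Nat.log p n = K)
    (h1 : p ^ (K+1) < m + n) :
    spAux p (F+1) m n =
      List.replicate (m + n - p ^ (K+1)) ((p ^ (K+1) : ℕ) : ℤ)
        ++ spAux p F (p ^ (K+1) - n) (p ^ (K+1) - m)
        ++ negRev (List.replicate (m + n - p ^ (K+1)) ((p ^ (K+1) : ℕ) : ℤ)) := by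
  rw [spAux]
  rw [if_neg hm]
  simp only [hK, if_pos h1]

lemma spAux_case2 (p F m n K : ℕ) (hm : m ≠ 0) (hK : Nat.log p n = K)
    (h1 : ¬ p ^ (K+1) < m + n) (h2 : p ^ K < m % p ^ K + n % p ^ K) :
    spAux p (F+1) m n =
      List.replicate (m % p ^ K + n % p ^ K - p ^ K)
          (((m / p ^ K + n / p ^ K + 1) * p ^ K : ℕ) : ℤ)
        ++ spAux p F ((m / p ^ K + n / p ^ K + 1) * p ^ K - n)
            ((m / p ^ K + n / p ^ K + 1) * p ^ K - m)
        ++ negRev (List.replicate (m % p ^ K + n % p ^ K - p ^ K)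
            (((m / p ^ K + n / p ^ K + 1) * p ^ K : ℕ) : ℤ)) := by
  rw [spAux, if_neg hm]
  simp only [hK, if_neg h1, if_pos h2]

lemma spAux_case3 (p F m n K : ℕ) (hm : m ≠ 0) (hK : Nat.log p n = K)
    (h1 : ¬ p ^ (K+1) < m + n) (h2 : ¬ p ^ K < m % p ^ K + n % p ^ K)
    (h3 : 1 ≤ m % p ^ K + n % p ^ K ∧ 0 < m / p ^ K) :
    spAux p (F+1) m n =
      (spAux p F (min (m % p ^ K) (n % p ^ K)) (max (m % p ^ K) (n % p ^ K))).map
          (fun x => x + (((m / p ^ K + n / p ^ K) * p ^ K : ℕ) : ℤ))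
        ++ spAux p F ((m / p ^ K + n / p ^ K) * p ^ K - n)
            ((m / p ^ K + n / p ^ K) * p ^ K - m)
        ++ negRev ((spAux p F (min (m % p ^ K) (n % p ^ K)) (max (m % p ^ K) (n % p ^ K))).map
          (fun x => x + (((m / p ^ K + n / p ^ K) * p ^ K : ℕ) : ℤ))) := by
  rw [spAux, if_neg hm]
  simp only [hK, if_neg h1, if_neg h2, if_pos h3]

lemma spAux_case6 (p F m n K : ℕ) (hm : m ≠ 0) (hK : Nat.log p n = K)
    (h1 : ¬ p ^ (K+1) < m + n) (h2 : ¬ p ^ K < m % p ^ K + n % p ^ K)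
    (h3 : ¬ (1 ≤ m % p ^ K + n % p ^ K ∧ 0 < m / p ^ K))
    (h4 : ¬ (m / p ^ K = 0 ∧ 0 < n % p ^ K))
    (h5 : ¬ (m / p ^ K = 0 ∧ n % p ^ K = 0)) :
    spAux p (F+1) m n =
      List.replicate (p ^ K) (((m / p ^ K + n / p ^ K - 1) * p ^ K : ℕ) : ℤ)
        ++ spAux p F ((m / p ^ K - 1) * p ^ K) ((n / p ^ K - 1) * p ^ K)
        ++ negRev (List.replicate (p ^ K) (((m / p ^ K + n / p ^ K - 1) * p ^ K : ℕ) : ℤ)) := by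
  rw [spAux, if_neg hm]
  simp only [hK, if_neg h1, if_neg h2, if_neg h3, if_neg h4, if_neg h5]

lemma stair_length (N : ℕ) : (stair N).length = N := by
  rw [stair, List.length_map, List.length_range]

lemma negRev_length (s : List ℤ) : (negRev s).length = s.length := by
  rw [negRev, List.length_map, List.length_reverse]

lemma glue (A N₂ : ℕ) (S : ℤ) (hS : S = (N₂ : ℤ) + A) :
    stair (N₂ + 2 * A) =
      (stair A).map (fun x => x + S) ++ stair N₂
        ++ negRev ((stair A).map (fun x => x + S)) := by
  apply List.ext_getElem
  · simp only [List.length_append, stair_length, negRev_length, List.length_map]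
    omega
  · intro i h1 h2
    simp only [List.length_append, stair_length, negRev_length, List.length_map] at h2
    simp only [stair, negRev, List.getElem_append, List.length_append, List.length_map,
      List.length_range, List.length_reverse, List.map_map]
    split_ifs with hA hB <;>
      simp only [List.getElem_map, List.getElem_range, List.getElem_reverse, List.length_map,
        List.length_range, Function.comp] <;>
      push_cast <;> omega

lemma glueRep (N₂ : ℕ) (v : ℤ) (hv : v = (N₂ : ℤ) + 1) :
    stair (N₂ + 2) =
      List.replicate 1 v ++ stair N₂ ++ negRev (List.replicate 1 v) := by
  have h1 : (stair 1).map (fun x => x + v) = List.replicate 1 v := by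
    simp [stair, List.range_succ]
  have h2 := glue 1 N₂ v (by rw [hv]; push_cast; ring)
  rw [h1] at h2
  simpa using h2

lemma small (p r : ℕ) (hp : p = 2 * r + 1) (hr : 1 ≤ r) :
    ∀ j F n, j ≤ r → (n = j ∨ n = j + 1) → 2 * j + n + 1 ≤ F →
      spAux p F j n = stair (j + n) := by
  intro j
  induction j with
  | zero =>
    intro F n _ hn hF
    obtain ⟨F', rfl⟩ : ∃ F', F = F' + 1 := ⟨F - 1, by omega⟩
    rw [spAux, if_pos rfl]
    rcases hn with rfl | rfl
    · simp [stair]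
    · simp [stair, List.range_succ]
  | succ j ih =>
    intro F n hj hn hF
    obtain ⟨F', rfl⟩ : ∃ F', F = F' + 1 := ⟨F - 1, by omega⟩
    have hnp : n < p := by omega
    have hn1 : 1 ≤ n := by omega
    have hK : Nat.log p n = 0 :=
      Nat.log_eq_of_pow_le_of_lt_pow (by simpa using hn1) (by simpa using hnp)
    rw [spAux_case6 p F' (j+1) n 0 (by omega) hK
      (by simp only [zero_add, pow_one]; omega)
      (by simp only [pow_zero]; omega)
      (by simp only [pow_zero]; omega)
      (by simp only [pow_zero]; omega)
      (by simp only [pow_zero]; omega)]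
    simp only [pow_zero, Nat.div_one, Nat.mod_one, mul_one, Nat.add_sub_cancel]
    have hih : spAux p F' j (n-1) = stair (j + (n-1)) :=
      ih F' (n-1) (by omega) (by omega) (by omega)
    rw [hih]
    rw [show ((j + 1 + n - 1 : ℕ) : ℤ) = ((j + (n-1) : ℕ) : ℤ) + 1 from by push_cast; omega]
    rw [show j + 1 + n = (j + (n-1)) + 2 from by omega]
    exact (glueRep (j + (n-1)) _ rfl).symm

lemma spModH (p t P z w : ℕ) (hP : P = p ^ t) (hw : w < P) :
    (z * P + w) % p ^ t = w := by
  rw [← hP, Nat.mul_comm z P, Nat.mul_add_mod, Nat.mod_eq_of_lt hw]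

lemma spDivH (p t P z w : ℕ) (hP : P = p ^ t) (hw : w < P) :
    (z * P + w) / p ^ t = z := by
  rw [← hP, Nat.mul_comm z P, Nat.mul_add_div (by omega), Nat.div_eq_of_lt hw, Nat.add_zero]

lemma key (p r : ℕ) (hp : p = 2 * r + 1) (hr : 1 ≤ r) :
    ∀ F t i x y P lt, P = p ^ t → P = 2 * lt + 1 → 1 ≤ t → i ≤ r →
      (x = lt ∨ x = lt + 1) → (y = lt ∨ y = lt + 1) → x ≤ y →
      2 * (i * P + x) + (i * P + y) + 1 ≤ F →
      spAux p F (i * P + x) (i * P + y) = stair (2 * i * P + x + y) := by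
  intro F
  induction F using Nat.strong_induction_on with
  | _ F IH =>
  intro t i x y P lt hP hPl ht hi hx hy hxy hF
  obtain ⟨F', rfl⟩ : ∃ F', F = F' + 1 := ⟨F - 1, by omega⟩
  have hp3 : 3 ≤ p := by omega
  have hPp : p ≤ P := by rw [hP]; exact Nat.le_self_pow (by omega) p
  have hP3 : 3 ≤ P := by omega
  have hlt1 : 1 ≤ lt := by omega
  have hpP : p ^ (t+1) = 2*(r*P) + P := by rw [pow_succ, ← hP, hp]; ring
  have hrP : P ≤ r * P := Nat.le_mul_of_pos_left P (by omega)
  rcases hx with hxx | rfl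
  · obtain rfl := hxx.symm
    rcases hy with hyy | rfl
    · obtain rfl := hyy.symm
      -- Case (L, L)
      by_cases hi0 : i = 0
      · subst hi0
        simp only [zero_mul, zero_add, mul_zero] at hF ⊢
        by_cases ht1 : t = 1
        · have hlr : lt = r := by subst ht1; rw [pow_one] at hP; omega
          rw [hlr]; rw [hlr] at hF
          exact small p r hp hr r (F'+1) r le_rfl (Or.inl rfl) hF
        · have ht2 : 2 ≤ t := by omega
          have hQP : P = p * p ^ (t-1) := by
            rw [hP]
            conv_lhs => rw [show t = (t-1)+1 from by omega]
            rw [pow_succ']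
          obtain ⟨l', hQl⟩ : ∃ l', p ^ (t-1) = 2*l'+1 := by
            obtain ⟨c, hc⟩ := Odd.pow (n := t-1) (⟨r, by omega⟩ : Odd p)
            exact ⟨c, by omega⟩
          have hrq : p^(t-1) ≤ r * p^(t-1) := Nat.le_mul_of_pos_left _ (by omega)
          have hltQ : lt = r * p^(t-1) + l' := by
            have h1 : 2*lt+1 = p * p^(t-1) := by rw [← hPl, hQP]
            have h2 : p * p^(t-1) = 2*(r*p^(t-1)) + p^(t-1) := by rw [hp]; ring
            omega
          have hl1 : 1 ≤ l' := by
            have hpp : p ≤ p^(t-1) := by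
              conv_lhs => rw [← pow_one p]
              exact Nat.pow_le_pow_right (by omega) (by omega)
            omega
          have hts : p ^ (t-1+1) = P := by rw [hP]; congr 1; omega
          have hK : Nat.log p lt = t - 1 :=
            Nat.log_eq_of_pow_le_of_lt_pow (by omega) (by rw [hts]; omega)
          have hmodm : lt % p ^ (t-1) = l' := by
            conv_lhs => rw [hltQ]
            exact spModH p (t-1) (p^(t-1)) r l' rfl (by omega)
          have hdivm : lt / p ^ (t-1) = r := by
            conv_lhs => rw [hltQ]
            exact spDivH p (t-1) (p^(t-1)) r l' rfl (by omega)
          rw [spAux_case3 p F' lt lt (t-1) (by omega) hK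
            (by rw [hts]; omega)
            (by rw [hmodm]; omega)
            (by rw [hmodm, hdivm]; exact ⟨by omega, by omega⟩)]
          rw [hmodm, hdivm, Nat.min_self, Nat.max_self]
          have e2 : (r-1) * p^(t-1) + p^(t-1) = r * p^(t-1) := by
            conv_rhs => rw [show r = (r-1)+1 from by omega]
            ring
          have e1 : (r+r) * p^(t-1) = r*p^(t-1) + r*p^(t-1) := by ring
          rw [show (r+r) * p^(t-1) - lt = (r-1) * p^(t-1) + (l'+1) from by omega]
          have hc1 : spAux p F' (0 * p^(t-1) + l') (0 * p^(t-1) + l')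
              = stair (2*0*p^(t-1) + l' + l') :=
            IH F' (by omega) (t-1) 0 l' l' (p^(t-1)) l' rfl hQl (by omega) (by omega)
              (Or.inl rfl) (Or.inl rfl) le_rfl (by omega)
          simp only [zero_mul, zero_add, mul_zero] at hc1
          have hc2 : spAux p F' ((r-1)*p^(t-1) + (l'+1)) ((r-1)*p^(t-1) + (l'+1))
              = stair (2*(r-1)*p^(t-1) + (l'+1) + (l'+1)) :=
            IH F' (by omega) (t-1) (r-1) (l'+1) (l'+1) (p^(t-1)) l' rfl hQl (by omega)
              (by omega) (Or.inr rfl) (Or.inr rfl) le_rfl (by omega)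
          rw [hc1, hc2]
          have e3 : 2*(r-1)*p^(t-1) = (r-1)*p^(t-1) + (r-1)*p^(t-1) := by ring
          rw [show lt + lt = (2*(r-1)*p^(t-1) + (l'+1) + (l'+1)) + 2*(l'+l') from by omega]
          exact (glue (l'+l') _ _ (by
            exact_mod_cast show (r+r)*p^(t-1)
              = (2*(r-1)*p^(t-1) + (l'+1) + (l'+1)) + (l'+l') from by omega)).symm
      · -- (L, L), i ≥ 1
        obtain ⟨i', rfl⟩ : ∃ i', i = i' + 1 := ⟨i - 1, by omega⟩
        have hiP : (i'+1)*P ≤ r*P := Nat.mul_le_mul_right P (by omega)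
        have hiP1 : P ≤ (i'+1)*P := Nat.le_mul_of_pos_left P (by omega)
        have hK : Nat.log p ((i'+1)*P + lt) = t :=
          Nat.log_eq_of_pow_le_of_lt_pow (by rw [← hP]; omega) (by rw [hpP]; omega)
        have hmodm : ((i'+1)*P + lt) % p^t = lt := spModH p t P (i'+1) lt hP (by omega)
        have hdivm : ((i'+1)*P + lt) / p^t = i'+1 := spDivH p t P (i'+1) lt hP (by omega)
        have e1 : ((i'+1)+(i'+1))*P = (i'+1)*P + ((i'+1)*P) := by ring
        have e4 : (i'+1)*P = i'*P + P := by ring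
        rw [spAux_case3 p F' ((i'+1)*P + lt) ((i'+1)*P + lt) t (by omega) hK
          (by rw [hpP]; omega)
          (by rw [hmodm, ← hP]; omega)
          (by rw [hmodm, hdivm]; exact ⟨by omega, by omega⟩)]
        rw [hmodm, hdivm, Nat.min_self, Nat.max_self, ← hP]
        rw [show ((i'+1)+(i'+1))*P - ((i'+1)*P + lt) = i'*P + (lt+1) from by omega]
        have hc1 : spAux p F' (0*P + lt) (0*P + lt) = stair (2*0*P + lt + lt) :=
          IH F' (by omega) t 0 lt lt P lt hP hPl ht (by omega)
            (Or.inl rfl) (Or.inl rfl) le_rfl (by omega)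
        simp only [zero_mul, zero_add, mul_zero] at hc1
        have hc2 : spAux p F' (i'*P + (lt+1)) (i'*P + (lt+1))
            = stair (2*i'*P + (lt+1) + (lt+1)) :=
          IH F' (by omega) t i' (lt+1) (lt+1) P lt hP hPl ht (by omega)
            (Or.inr rfl) (Or.inr rfl) le_rfl (by omega)
        rw [hc1, hc2]
        have e5 : 2*(i'+1)*P = 2*(i'*P) + P + P := by ring
        have e6 : 2*i'*P = 2*(i'*P) := by ring
        rw [show 2*(i'+1)*P + lt + lt = (2*i'*P + (lt+1) + (lt+1)) + 2*(lt+lt) from by omega]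
        exact (glue (lt+lt) _ _ (by
          exact_mod_cast show ((i'+1)+(i'+1))*P
            = (2*i'*P + (lt+1) + (lt+1)) + (lt+lt) from by omega)).symm
    · -- Case (L, H)
      by_cases hi0 : i = 0
      · subst hi0
        simp only [zero_mul, zero_add, mul_zero] at hF ⊢
        by_cases ht1 : t = 1
        · have hlr : lt = r := by subst ht1; rw [pow_one] at hP; omega
          rw [hlr]; rw [hlr] at hF
          exact small p r hp hr r (F'+1) (r+1) le_rfl (Or.inr rfl) hF
        · have ht2 : 2 ≤ t := by omega
          have hQP : P = p * p ^ (t-1) := by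
            rw [hP]
            conv_lhs => rw [show t = (t-1)+1 from by omega]
            rw [pow_succ']
          obtain ⟨l', hQl⟩ : ∃ l', p ^ (t-1) = 2*l'+1 := by
            obtain ⟨c, hc⟩ := Odd.pow (n := t-1) (⟨r, by omega⟩ : Odd p)
            exact ⟨c, by omega⟩
          have hrq : p^(t-1) ≤ r * p^(t-1) := Nat.le_mul_of_pos_left _ (by omega)
          have hltQ : lt = r * p^(t-1) + l' := by
            have h1 : 2*lt+1 = p * p^(t-1) := by rw [← hPl, hQP]
            have h2 : p * p^(t-1) = 2*(r*p^(t-1)) + p^(t-1) := by rw [hp]; ring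
            omega
          have hl1 : 1 ≤ l' := by
            have hpp : p ≤ p^(t-1) := by
              conv_lhs => rw [← pow_one p]
              exact Nat.pow_le_pow_right (by omega) (by omega)
            omega
          have hts : p ^ (t-1+1) = P := by rw [hP]; congr 1; omega
          have hK : Nat.log p (lt+1) = t - 1 :=
            Nat.log_eq_of_pow_le_of_lt_pow (by omega) (by rw [hts]; omega)
          have hmodm : lt % p ^ (t-1) = l' := by
            conv_lhs => rw [hltQ]
            exact spModH p (t-1) (p^(t-1)) r l' rfl (by omega)
          have hdivm : lt / p ^ (t-1) = r := by
            conv_lhs => rw [hltQ]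
            exact spDivH p (t-1) (p^(t-1)) r l' rfl (by omega)
          have hmodn : (lt+1) % p ^ (t-1) = l'+1 := by
            conv_lhs => rw [show lt + 1 = r * p^(t-1) + (l'+1) from by omega]
            exact spModH p (t-1) (p^(t-1)) r (l'+1) rfl (by omega)
          have hdivn : (lt+1) / p ^ (t-1) = r := by
            conv_lhs => rw [show lt + 1 = r * p^(t-1) + (l'+1) from by omega]
            exact spDivH p (t-1) (p^(t-1)) r (l'+1) rfl (by omega)
          rw [spAux_case3 p F' lt (lt+1) (t-1) (by omega) hK
            (by rw [hts]; omega)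
            (by rw [hmodm, hmodn]; omega)
            (by rw [hmodm, hmodn, hdivm]; exact ⟨by omega, by omega⟩)]
          rw [hmodm, hmodn, hdivm, hdivn]
          rw [Nat.min_eq_left (by omega), Nat.max_eq_right (by omega)]
          have e2 : (r-1) * p^(t-1) + p^(t-1) = r * p^(t-1) := by
            conv_rhs => rw [show r = (r-1)+1 from by omega]
            ring
          have e1 : (r+r) * p^(t-1) = r*p^(t-1) + r*p^(t-1) := by ring
          rw [show (r+r) * p^(t-1) - (lt+1) = (r-1) * p^(t-1) + l' from by omega]
          rw [show (r+r) * p^(t-1) - lt = (r-1) * p^(t-1) + (l'+1) from by omega]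
          have hc1 : spAux p F' (0 * p^(t-1) + l') (0 * p^(t-1) + (l'+1))
              = stair (2*0*p^(t-1) + l' + (l'+1)) :=
            IH F' (by omega) (t-1) 0 l' (l'+1) (p^(t-1)) l' rfl hQl (by omega) (by omega)
              (Or.inl rfl) (Or.inr rfl) (by omega) (by omega)
          simp only [zero_mul, zero_add, mul_zero] at hc1
          have hc2 : spAux p F' ((r-1)*p^(t-1) + l') ((r-1)*p^(t-1) + (l'+1))
              = stair (2*(r-1)*p^(t-1) + l' + (l'+1)) :=
            IH F' (by omega) (t-1) (r-1) l' (l'+1) (p^(t-1)) l' rfl hQl (by omega)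
              (by omega) (Or.inl rfl) (Or.inr rfl) (by omega) (by omega)
          rw [hc1, hc2]
          have e3 : 2*(r-1)*p^(t-1) = (r-1)*p^(t-1) + (r-1)*p^(t-1) := by ring
          rw [show lt + (lt+1) = (2*(r-1)*p^(t-1) + l' + (l'+1)) + 2*(l'+(l'+1)) from by omega]
          exact (glue (l'+(l'+1)) _ _ (by
            exact_mod_cast show (r+r)*p^(t-1)
              = (2*(r-1)*p^(t-1) + l' + (l'+1)) + (l'+(l'+1)) from by omega)).symm
      · -- (L, H), i ≥ 1
        obtain ⟨i', rfl⟩ : ∃ i', i = i' + 1 := ⟨i - 1, by omega⟩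
        have hiP : (i'+1)*P ≤ r*P := Nat.mul_le_mul_right P (by omega)
        have hiP1 : P ≤ (i'+1)*P := Nat.le_mul_of_pos_left P (by omega)
        have hK : Nat.log p ((i'+1)*P + (lt+1)) = t :=
          Nat.log_eq_of_pow_le_of_lt_pow (by rw [← hP]; omega) (by rw [hpP]; omega)
        have hmodm : ((i'+1)*P + lt) % p^t = lt := spModH p t P (i'+1) lt hP (by omega)
        have hdivm : ((i'+1)*P + lt) / p^t = i'+1 := spDivH p t P (i'+1) lt hP (by omega)
        have hmodn : ((i'+1)*P + (lt+1)) % p^t = lt+1 :=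
          spModH p t P (i'+1) (lt+1) hP (by omega)
        have hdivn : ((i'+1)*P + (lt+1)) / p^t = i'+1 :=
          spDivH p t P (i'+1) (lt+1) hP (by omega)
        have e1 : ((i'+1)+(i'+1))*P = (i'+1)*P + ((i'+1)*P) := by ring
        have e4 : (i'+1)*P = i'*P + P := by ring
        rw [spAux_case3 p F' ((i'+1)*P + lt) ((i'+1)*P + (lt+1)) t (by omega) hK
          (by rw [hpP]; omega)
          (by rw [hmodm, hmodn, ← hP]; omega)
          (by rw [hmodm, hmodn, hdivm]; exact ⟨by omega, by omega⟩)]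
        rw [hmodm, hmodn, hdivm, hdivn, ← hP]
        rw [Nat.min_eq_left (by omega), Nat.max_eq_right (by omega)]
        rw [show ((i'+1)+(i'+1))*P - ((i'+1)*P + (lt+1)) = i'*P + lt from by omega]
        rw [show ((i'+1)+(i'+1))*P - ((i'+1)*P + lt) = i'*P + (lt+1) from by omega]
        have hc1 : spAux p F' (0*P + lt) (0*P + (lt+1)) = stair (2*0*P + lt + (lt+1)) :=
          IH F' (by omega) t 0 lt (lt+1) P lt hP hPl ht (by omega)
            (Or.inl rfl) (Or.inr rfl) (by omega) (by omega)
        simp only [zero_mul, zero_add, mul_zero] at hc1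
        have hc2 : spAux p F' (i'*P + lt) (i'*P + (lt+1))
            = stair (2*i'*P + lt + (lt+1)) :=
          IH F' (by omega) t i' lt (lt+1) P lt hP hPl ht (by omega)
            (Or.inl rfl) (Or.inr rfl) (by omega) (by omega)
        rw [hc1, hc2]
        have e5 : 2*(i'+1)*P = 2*(i'*P) + P + P := by ring
        have e6 : 2*i'*P = 2*(i'*P) := by ring
        rw [show 2*(i'+1)*P + lt + (lt+1)
          = (2*i'*P + lt + (lt+1)) + 2*(lt+(lt+1)) from by omega]
        exact (glue (lt+(lt+1)) _ _ (by
          exact_mod_cast show ((i'+1)+(i'+1))*P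
            = (2*i'*P + lt + (lt+1)) + (lt+(lt+1)) from by omega)).symm
  · rcases hy with hyy | rfl
    · obtain rfl := hyy.symm
      exact absurd hxy (by omega)
    · -- Case (H, H)
      by_cases hi0 : i = 0
      · subst hi0
        simp only [zero_mul, zero_add, mul_zero] at hF ⊢
        have hQP : P = p * p ^ (t-1) := by
          rw [hP]
          conv_lhs => rw [show t = (t-1)+1 from by omega]
          rw [pow_succ']
        have hQ1 : 1 ≤ p ^ (t-1) := Nat.one_le_pow _ _ (by omega)
        have hQle : p^(t-1) ≤ lt := by
          have h2 : 2 * p^(t-1) ≤ p * p^(t-1) := Nat.mul_le_mul_right _ (by omega)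
          omega
        have hts : p ^ (t-1+1) = P := by rw [hP]; congr 1; omega
        have hK : Nat.log p (lt+1) = t - 1 :=
          Nat.log_eq_of_pow_le_of_lt_pow (by omega) (by rw [hts]; omega)
        rw [spAux_case1 p F' (lt+1) (lt+1) (t-1) (by omega) hK (by rw [hts]; omega)]
        rw [hts]
        rw [show lt + 1 + (lt+1) - P = 1 from by omega]
        rw [show P - (lt+1) = lt from by omega]
        have hc : spAux p F' (0*P + lt) (0*P + lt) = stair (2*0*P + lt + lt) :=
          IH F' (by omega) t 0 lt lt P lt hP hPl ht (by omega)
            (Or.inl rfl) (Or.inl rfl) le_rfl (by omega)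
        simp only [zero_mul, zero_add, mul_zero] at hc
        rw [hc]
        rw [show lt + 1 + (lt+1) = (lt+lt) + 2 from by omega]
        exact (glueRep (lt+lt) _ (by exact_mod_cast show P = (lt+lt) + 1 from by omega)).symm
      · obtain ⟨i', rfl⟩ : ∃ i', i = i' + 1 := ⟨i - 1, by omega⟩
        have hiP : (i'+1)*P ≤ r*P := Nat.mul_le_mul_right P (by omega)
        have hiP1 : P ≤ (i'+1)*P := Nat.le_mul_of_pos_left P (by omega)
        have hK : Nat.log p ((i'+1)*P + (lt+1)) = t :=
          Nat.log_eq_of_pow_le_of_lt_pow (by rw [← hP]; omega) (by rw [hpP]; omega)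
        have hmodm : ((i'+1)*P + (lt+1)) % p^t = lt+1 :=
          spModH p t P (i'+1) (lt+1) hP (by omega)
        have hdivm : ((i'+1)*P + (lt+1)) / p^t = i'+1 :=
          spDivH p t P (i'+1) (lt+1) hP (by omega)
        have e1 : ((i'+1)+(i'+1)+1)*P = (i'+1)*P + ((i'+1)*P + P) := by ring
        have e6 : 2*(i'+1)*P = (i'+1)*P + (i'+1)*P := by ring
        by_cases hir : i' + 1 = r
        · have hiPr : (i'+1)*P = r*P := by rw [hir]
          rw [spAux_case1 p F' ((i'+1)*P + (lt+1)) ((i'+1)*P + (lt+1)) t (by omega) hK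
            (by rw [hpP]; omega)]
          rw [show (i'+1)*P + (lt+1) + ((i'+1)*P + (lt+1)) - p^(t+1) = 1 from by
            rw [hpP]; omega]
          rw [show p^(t+1) - ((i'+1)*P + (lt+1)) = r*P + lt from by rw [hpP]; omega]
          have hc : spAux p F' (r*P + lt) (r*P + lt) = stair (2*r*P + lt + lt) :=
            IH F' (by omega) t r lt lt P lt hP hPl ht le_rfl
              (Or.inl rfl) (Or.inl rfl) le_rfl (by omega)
          rw [hc]
          have e7 : 2*r*P = r*P + r*P := by ring
          rw [show 2*(i'+1)*P + (lt+1) + (lt+1) = (2*r*P + lt + lt) + 2 from by omega]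
          exact (glueRep (2*r*P + lt + lt) _ (by
            exact_mod_cast show p^(t+1) = (2*r*P + lt + lt) + 1 from by rw [hpP]; omega)).symm
        · have hiP2 : (i'+1)*P + P ≤ r*P := by
            have h2 := Nat.mul_le_mul_right P (show i'+1+1 ≤ r from by omega)
            have e2 : (i'+1+1)*P = (i'+1)*P + P := by ring
            omega
          rw [spAux_case2 p F' ((i'+1)*P + (lt+1)) ((i'+1)*P + (lt+1)) t (by omega) hK
            (by rw [hpP]; omega)
            (by rw [hmodm, ← hP]; omega)]
          rw [hmodm, hdivm, ← hP]
          rw [show lt + 1 + (lt+1) - P = 1 from by omega]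
          rw [show ((i'+1)+(i'+1)+1)*P - ((i'+1)*P + (lt+1)) = (i'+1)*P + lt from by omega]
          have hc : spAux p F' ((i'+1)*P + lt) ((i'+1)*P + lt)
              = stair (2*(i'+1)*P + lt + lt) :=
            IH F' (by omega) t (i'+1) lt lt P lt hP hPl ht (by omega)
              (Or.inl rfl) (Or.inl rfl) le_rfl (by omega)
          rw [hc]
          rw [show 2*(i'+1)*P + (lt+1) + (lt+1) = (2*(i'+1)*P + lt + lt) + 2 from by omega]
          exact (glueRep (2*(i'+1)*P + lt + lt) _ (by
            exact_mod_cast show ((i'+1)+(i'+1)+1)*P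
              = (2*(i'+1)*P + lt + lt) + 1 from by omega)).symm

/-- **Lemma 2(1) (Barry).** Let `p` be an odd prime, `t ≥ 1`, and `x, y` each equal to
`(pᵗ − 1)/2` or `(pᵗ + 1)/2` (signs chosen independently) with `x ≤ y`. Then for every
`0 ≤ i ≤ (p−1)/2`, the Jordan partition `λ(i·pᵗ + x, i·pᵗ + y, p)` is standard. -/
theorem jordanPartition_standard_half (p : ℕ) (hp : Nat.Prime p) (hodd : Odd p)
    (t : ℕ) (ht : 1 ≤ t) (x y : ℕ)
    (hx : x = (p ^ t - 1) / 2 ∨ x = (p ^ t + 1) / 2)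
    (hy : y = (p ^ t - 1) / 2 ∨ y = (p ^ t + 1) / 2)
    (hxy : x ≤ y) (i : ℕ) (hi : i ≤ (p - 1) / 2) :
    IsStandard p (i * p ^ t + x) (i * p ^ t + y) := by
  obtain ⟨r, hrp0⟩ := hodd
  have hrp : p = 2 * r + 1 := by omega
  have hp2 := hp.two_le
  have hr : 1 ≤ r := by omega
  obtain ⟨lt, hPl0⟩ := Odd.pow (n := t) (⟨r, hrp0⟩ : Odd p)
  have hPl : p ^ t = 2 * lt + 1 := by omega
  have hx' : x = lt ∨ x = lt + 1 := by
    rcases hx with h | h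
    · left; omega
    · right; omega
  have hy' : y = lt ∨ y = lt + 1 := by
    rcases hy with h | h
    · left; omega
    · right; omega
  have hir : i ≤ r := by omega
  have hk := key p r hrp hr (2*(i*p^t+x)+(i*p^t+y)+1) t i x y (p^t) lt rfl hPl ht hir
    hx' hy' hxy le_rfl
  unfold IsStandard jordanPartition sp
  rw [hk, stair, ← List.map_take, List.take_range]
  have e : 2*i*p^t = i*p^t + i*p^t := by ring
  rw [Nat.min_eq_left (by omega)]
  have hcoe : ∀ l : List ℕ, (l.flatMap fun a : ℕ => ([(a : ℤ)] : List ℤ))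
      = l.map (fun a : ℕ => (a : ℤ)) := by
    intro l
    induction l with
    | nil => rfl
    | cons h t ih => simp [List.flatMap_cons, ih]
  simp only [List.pure_def, List.bind_eq_flatMap, hcoe, List.map_map]
  apply List.map_congr_left
  intro j hj
  simp only [Function.comp]
  push_cast
  ring
end

section
/- Let p be a prime, let t be a positive integer, and let m and n be positive integers with m < p^t, m ≤ n, and p^t dividing n. Then λ(m,n,p) = (n, n, …, n), the constant sequence of m copies of n. -/
lemma negRev_replicate (k : ℕ) (x : ℤ) :
    negRev (List.replicate k x) = List.replicate k (-x) := by
  simp [negRev]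

lemma spAux_key (p : ℕ) (hp : Nat.Prime p) (t : ℕ) :
    ∀ fuel m n, 0 < m → m < p ^ t → p ^ t ∣ n → 0 < n → n + 1 ≤ fuel →
      spAux p fuel m n =
        List.replicate m (n : ℤ) ++ List.replicate (n - m) (0 : ℤ) ++
          List.replicate m (-(n : ℤ)) := by
  intro fuel
  induction fuel with
  | zero => intro m n _ _ _ _ h; omega
  | succ fuel ih =>
    intro m n hm hmp hdvd hn hfuel
    have hp1 : 1 < p := hp.one_lt
    have hpt2 : 2 ≤ p ^ t := by omega
    have hptn : p ^ t ≤ n := Nat.le_of_dvd hn hdvd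
    have htk : t ≤ Nat.log p n := (Nat.le_log_iff_pow_le hp1 hn.ne').mpr hptn
    set k := Nat.log p n with hk
    have hqpos : 0 < p ^ k := pow_pos (by omega) k
    have hqn : p ^ k ≤ n := Nat.pow_log_le_self p hn.ne'
    have hnq : n < p ^ (k + 1) := Nat.lt_pow_succ_log_self hp1 n
    have hptq : p ^ t ≤ p ^ k := Nat.pow_le_pow_right (le_of_lt hp1) htk
    have hmq : m < p ^ k := lt_of_lt_of_le hmp hptq
    have ha : m / p ^ k = 0 := Nat.div_eq_of_lt hmq
    have hc : m % p ^ k = m := Nat.mod_eq_of_lt hmq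
    have hddvd : p ^ t ∣ n % p ^ k := (Nat.dvd_mod_iff (pow_dvd_pow p htk)).mpr hdvd
    have hdm : n / p ^ k * p ^ k + n % p ^ k = n := Nat.div_add_mod' n (p ^ k)
    have hdlt : n % p ^ k < p ^ k := Nat.mod_lt n hqpos
    have hbp : n / p ^ k < p := by
      rw [Nat.div_lt_iff_lt_mul hqpos]
      calc n < p ^ (k + 1) := hnq
        _ = p * p ^ k := by rw [pow_succ, mul_comm]
    have hb1 : 1 ≤ n / p ^ k := (Nat.one_le_div_iff hqpos).mpr hqn
    have hmd : m + n % p ^ k ≤ p ^ k := by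
      rcases Nat.eq_zero_or_pos (n % p ^ k) with h0 | h0
      · omega
      · have h1 : p ^ t ≤ n % p ^ k := Nat.le_of_dvd h0 hddvd
        have h2 : p ^ t ∣ p ^ k - n % p ^ k := Nat.dvd_sub (pow_dvd_pow p htk) hddvd
        have h3 : p ^ t ≤ p ^ k - n % p ^ k := Nat.le_of_dvd (by omega) h2
        omega
    have hkey : n / p ^ k * p ^ k + p ^ k ≤ p ^ (k + 1) := by
      have h5 : (n / p ^ k + 1) * p ^ k ≤ p * p ^ k :=
        Nat.mul_le_mul_right _ hbp
      calc n / p ^ k * p ^ k + p ^ k = (n / p ^ k + 1) * p ^ k := by ring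
        _ ≤ p * p ^ k := h5
        _ = p ^ (k + 1) := by rw [pow_succ, mul_comm]
    have hC1 : ¬ (p ^ (k + 1) < m + n) := by
      push_neg
      linarith [hdm, hkey, hmd]
    have hC2 : ¬ (p ^ k < m % p ^ k + n % p ^ k) := by
      rw [hc]; exact Nat.not_lt.mpr hmd
    have hC3 : ¬ (1 ≤ m % p ^ k + n % p ^ k ∧ 0 < m / p ^ k) := by
      rw [ha]; simp
    simp only [spAux]
    rw [if_neg (Nat.pos_iff_ne_zero.mp hm)]
    rw [← hk, if_neg hC1, if_neg hC2, if_neg hC3]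
    rcases Nat.eq_zero_or_pos (n % p ^ k) with h0 | h0
    · -- Case 5
      have hC4 : ¬ (m / p ^ k = 0 ∧ 0 < n % p ^ k) := by rw [h0]; simp
      rw [if_neg hC4, if_pos ⟨ha, h0⟩]
      have hbqn : n / p ^ k * p ^ k = n :=
        Nat.div_mul_cancel (Nat.dvd_of_mod_eq_zero h0)
      simp only [hbqn, negRev_replicate]
    · -- Case 4
      rw [if_pos ⟨ha, h0⟩]
      simp only
      set n' := n / p ^ k * p ^ k - n % p ^ k with hn'
      have hd_lt : n % p ^ k < n / p ^ k * p ^ k :=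
        lt_of_lt_of_le hdlt (Nat.le_mul_of_pos_left _ hb1)
      have hn'1 : n' + n % p ^ k = n / p ^ k * p ^ k :=
        Nat.sub_add_cancel (le_of_lt hd_lt)
      have hsum : n' + 2 * (n % p ^ k) = n := by linarith [hdm, hn'1]
      have hbq : n / p ^ k * p ^ k = n - n % p ^ k := by omega
      have hdvd' : p ^ t ∣ n' := by
        rw [hn', hbq]
        exact Nat.dvd_sub (Nat.dvd_sub hdvd hddvd) hddvd
      have hn'pos : 0 < n' := by omega
      have hptn' : p ^ t ≤ n' := Nat.le_of_dvd hn'pos hdvd'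
      have hd2 : 2 ≤ n % p ^ k := le_trans hpt2 (Nat.le_of_dvd h0 hddvd)
      have hfuel' : n' + 1 ≤ fuel := by linarith
      rw [ih m n' hm hmp hdvd' hn'pos hfuel']
      have f1 : ¬ (((n' : ℕ) : ℤ) < 0) := by omega
      have f2 : ¬ ((0 : ℤ) < 0) := by simp
      have f3 : (-(n' : ℤ)) < 0 := by exact_mod_cast Int.neg_neg_of_pos (by exact_mod_cast hn'pos)
      have hcast : ((2 * (n / p ^ k) * p ^ k : ℕ) : ℤ) = (n : ℤ) + (n' : ℤ) := by
        have : 2 * (n / p ^ k) * p ^ k = n + n' := by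
          have h6 : 2 * (n / p ^ k) * p ^ k = 2 * (n / p ^ k * p ^ k) := by ring
          omega
        exact_mod_cast congrArg (Nat.cast : ℕ → ℤ) this
      rw [List.filter_append, List.filter_append]
      rw [List.filter_replicate_of_neg (by simp),
          List.filter_replicate_of_neg (by simp),
          List.filter_replicate_of_pos (by simp [f3, hn'pos])]
      simp only [List.nil_append, List.map_replicate, hcast]
      have : -(n' : ℤ) + ((n : ℤ) + (n' : ℤ)) = (n : ℤ) := by ring
      rw [this, negRev_replicate]

/-- **Lemma 3 (Barry).** If `p` is prime, `t ≥ 1`, `m, n` are positive integers with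
`m < pᵗ`, `m ≤ n`, and `pᵗ ∣ n`, then `λ(m,n,p) = (n, n, …, n)` (`m` copies of `n`). -/
theorem jordanPartition_eq_replicate_of_dvd (p : ℕ) (hp : Nat.Prime p)
    (t : ℕ) (ht : 1 ≤ t) (m n : ℕ) (hm : 0 < m) (hn : 0 < n)
    (hmp : m < p ^ t) (hmn : m ≤ n) (hdvd : p ^ t ∣ n) :
    jordanPartition p m n = List.replicate m (n : ℤ) := by
  have h := spAux_key p hp t (2 * m + n + 1) m n hm hmp hdvd hn (by omega)
  unfold jordanPartition sp
  rw [h, List.append_assoc, List.take_append_of_le_length (by simp), List.take_of_length_le (by simp)]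
end

section
/- Let p be a prime and let 0 < m ≤ n with p^k ≤ n < p^{k+1}; write n = b·p^k + d (0 < b < p, 0 ≤ d < p^k) and m = a·p^k + c (0 ≤ a < p, 0 ≤ c < p^k). Suppose m + n ≤ p^{k+1} and c + d > p^k (Case 2 of the recursive definition of s_p). Then λ(m,n,p) is standard if and only if c + d − p^k = 1 and λ((a+b+1)p^k − n, (a+b+1)p^k − m, p) is standard. -/
/-- Bound package for entries of `s_p(m,n)`. -/
abbrev SpBnd (m n : ℕ) (x : ℤ) : Prop :=
  x ≤ (m : ℤ) + n - 1 ∧ -((m : ℤ) + n - 1) ≤ x ∧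
    (x ≠ 0 → ((n : ℤ) - m + 1 ≤ x ∨ x ≤ -((n : ℤ) - m + 1)))

lemma SpBnd.of_neg {m n : ℕ} {x : ℤ} (h : SpBnd m n (-x)) : SpBnd m n x := by
  obtain ⟨h1, h2, h3⟩ := h
  refine ⟨by omega, by omega, fun hx => ?_⟩
  rcases h3 (by omega) with h | h
  · right; omega
  · left; omega

lemma mem_negRev {x : ℤ} {s : List ℤ} (h : x ∈ negRev s) : -x ∈ s := by
  simp only [negRev, List.mem_map, List.mem_reverse] at h
  obtain ⟨y, hy, rfl⟩ := h
  simpa using hy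

lemma negRev_countP_neg (s : List ℤ) :
    (negRev s).countP (fun x => decide (x < 0)) = s.countP (fun x => decide (0 < x)) := by
  unfold negRev
  rw [List.countP_map, List.countP_reverse]
  congr 1
  funext x
  simp only [Function.comp, decide_eq_decide]
  exact neg_lt_zero

lemma countP_neg_of_pos {s : List ℤ} (h : ∀ x ∈ s, 0 < x) :
    s.countP (fun x => decide (x < 0)) = 0 :=
  List.countP_eq_zero.2 (fun a ha => by simpa using (h a ha).le.not_gt)

lemma countP_pos_of_pos {s : List ℤ} (h : ∀ x ∈ s, 0 < x) :
    s.countP (fun x => decide (0 < x)) = s.length :=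
  List.countP_eq_length.2 (fun a ha => by simpa using h a ha)

section CaseLemmas

variable (p f m n K q a b c d : ℕ)

lemma spAux_case1_eq (hm : m ≠ 0) (hK : Nat.log p n = K)
    (h1 : p ^ (K + 1) < m + n) :
    spAux p (f + 1) m n =
      List.replicate (m + n - p ^ (K + 1)) ((p ^ (K + 1) : ℕ) : ℤ) ++
        spAux p f (p ^ (K + 1) - n) (p ^ (K + 1) - m) ++
        negRev (List.replicate (m + n - p ^ (K + 1)) ((p ^ (K + 1) : ℕ) : ℤ)) := by
  subst hK
  simp only [spAux, hm, if_false, if_pos h1]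

lemma spAux_case2_eq (hm : m ≠ 0) (hK : Nat.log p n = K) (hq : p ^ K = q)
    (ha : m / q = a) (hb : n / q = b) (hc : m % q = c) (hd : n % q = d)
    (h1 : ¬ p ^ (K + 1) < m + n) (h2 : q < c + d) :
    spAux p (f + 1) m n =
      List.replicate (c + d - q) (((a + b + 1) * q : ℕ) : ℤ) ++
        spAux p f ((a + b + 1) * q - n) ((a + b + 1) * q - m) ++
        negRev (List.replicate (c + d - q) (((a + b + 1) * q : ℕ) : ℤ)) := by
  subst hK hq ha hb hc hd
  simp only [spAux, hm, if_false, if_neg h1, if_pos h2]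

lemma spAux_case3_eq (hm : m ≠ 0) (hK : Nat.log p n = K) (hq : p ^ K = q)
    (ha : m / q = a) (hb : n / q = b) (hc : m % q = c) (hd : n % q = d)
    (h1 : ¬ p ^ (K + 1) < m + n) (h2 : ¬ q < c + d) (h3 : 1 ≤ c + d ∧ 0 < a) :
    spAux p (f + 1) m n =
      (spAux p f (min c d) (max c d)).map (fun x => x + (((a + b) * q : ℕ) : ℤ)) ++
        spAux p f ((a + b) * q - n) ((a + b) * q - m) ++
        negRev ((spAux p f (min c d) (max c d)).map (fun x => x + (((a + b) * q : ℕ) : ℤ))) := by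
  subst hK hq ha hb hc hd
  simp only [spAux, hm, if_false, if_neg h1, if_neg h2, if_pos h3]

lemma spAux_case4_eq (hm : m ≠ 0) (hK : Nat.log p n = K) (hq : p ^ K = q)
    (ha : m / q = a) (hb : n / q = b) (hc : m % q = c) (hd : n % q = d)
    (h1 : ¬ p ^ (K + 1) < m + n) (h2 : ¬ q < c + d) (h3 : ¬ (1 ≤ c + d ∧ 0 < a))
    (h4 : a = 0 ∧ 0 < d) :
    spAux p (f + 1) m n =
      ((spAux p f m (b * q - d)).filter (fun x => decide (x < 0))).map
          (fun x => x + ((2 * b * q : ℕ) : ℤ)) ++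
        List.replicate (n - m) (0 : ℤ) ++
        negRev (((spAux p f m (b * q - d)).filter (fun x => decide (x < 0))).map
          (fun x => x + ((2 * b * q : ℕ) : ℤ))) := by
  subst hK hq ha hb hc hd
  simp only [spAux, hm, if_false, if_neg h1, if_neg h2, if_neg h3, if_pos h4]

lemma spAux_case5_eq (hm : m ≠ 0) (hK : Nat.log p n = K) (hq : p ^ K = q)
    (ha : m / q = a) (hb : n / q = b) (hc : m % q = c) (hd : n % q = d)
    (h1 : ¬ p ^ (K + 1) < m + n) (h2 : ¬ q < c + d) (h3 : ¬ (1 ≤ c + d ∧ 0 < a))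
    (h4 : ¬ (a = 0 ∧ 0 < d)) (h5 : a = 0 ∧ d = 0) :
    spAux p (f + 1) m n =
      List.replicate m ((b * q : ℕ) : ℤ) ++ List.replicate (b * q - m) (0 : ℤ) ++
        negRev (List.replicate m ((b * q : ℕ) : ℤ)) := by
  subst hK hq ha hb hc hd
  simp only [spAux, hm, if_false, if_neg h1, if_neg h2, if_neg h3, if_neg h4, if_pos h5]

lemma spAux_case6_eq (hm : m ≠ 0) (hK : Nat.log p n = K) (hq : p ^ K = q)
    (ha : m / q = a) (hb : n / q = b) (hc : m % q = c) (hd : n % q = d)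
    (h1 : ¬ p ^ (K + 1) < m + n) (h2 : ¬ q < c + d) (h3 : ¬ (1 ≤ c + d ∧ 0 < a))
    (h4 : ¬ (a = 0 ∧ 0 < d)) (h5 : ¬ (a = 0 ∧ d = 0)) :
    spAux p (f + 1) m n =
      List.replicate q (((a + b - 1) * q : ℕ) : ℤ) ++
        spAux p f ((a - 1) * q) ((b - 1) * q) ++
        negRev (List.replicate q (((a + b - 1) * q : ℕ) : ℤ)) := by
  subst hK hq ha hb hc hd
  simp only [spAux, hm, if_false, if_neg h1, if_neg h2, if_neg h3, if_neg h4, if_neg h5]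

end CaseLemmas

lemma spec_parts (m n : ℕ) (s1 s2 : List ℤ)
    (hpos : ∀ x ∈ s1, 0 < x)
    (hb1 : ∀ x ∈ s1, SpBnd m n x) (hb2 : ∀ x ∈ s2, SpBnd m n x) :
    (s1 ++ s2 ++ negRev s1).length = 2 * s1.length + s2.length ∧
    (s1 ++ s2 ++ negRev s1).countP (fun x => decide (x < 0))
      = s2.countP (fun x => decide (x < 0)) + s1.length ∧
    ∀ x ∈ s1 ++ s2 ++ negRev s1, SpBnd m n x := by
  refine ⟨by simp [negRev_length]; omega, ?_, ?_⟩
  · rw [List.countP_append, List.countP_append, negRev_countP_neg,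
      countP_neg_of_pos hpos, countP_pos_of_pos hpos]
    omega
  · intro x hx
    simp only [List.mem_append] at hx
    rcases hx with (hx | hx) | hx
    · exact hb1 x hx
    · exact hb2 x hx
    · exact SpBnd.of_neg (hb1 _ (mem_negRev hx))

lemma spAux_spec (p : ℕ) (hp : 2 ≤ p) :
    ∀ f m n, m ≤ n → 2 * m + n < f → ∀ g, 2 * m + n < g →
      spAux p f m n = spAux p g m n ∧
      (spAux p f m n).length = m + n ∧
      (spAux p f m n).countP (fun x => decide (x < 0)) = m ∧
      ∀ x ∈ spAux p f m n, SpBnd m n x := by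
  intro f
  induction f using Nat.strong_induction_on with
  | _ f IH =>
  intro m n hmn hf g hg
  obtain ⟨f1, rfl⟩ : ∃ f1, f = f1 + 1 := ⟨f - 1, by omega⟩
  obtain ⟨g1, rfl⟩ : ∃ g1, g = g1 + 1 := ⟨g - 1, by omega⟩
  by_cases hm0 : m = 0
  · subst hm0
    have hrep : ∀ h : ℕ, spAux p (h + 1) 0 n = List.replicate n (0 : ℤ) := fun h => by
      simp [spAux]
    rw [hrep f1, hrep g1]
    refine ⟨rfl, by simp, ?_, ?_⟩
    · rw [List.countP_eq_zero.2]
      intro x hx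
      rw [List.eq_of_mem_replicate hx]
      simp
    · intro x hx
      have hn1 : n ≠ 0 := by rintro rfl; simp at hx
      rw [List.eq_of_mem_replicate hx]
      exact ⟨by push_cast; omega, by push_cast; omega, fun h => absurd rfl h⟩
  · -- main branch, m ≠ 0
    have hm1 : 1 ≤ m := Nat.pos_of_ne_zero hm0
    have hn0 : n ≠ 0 := by omega
    obtain ⟨K, hK⟩ : ∃ K, Nat.log p n = K := ⟨_, rfl⟩
    obtain ⟨Q, hQ⟩ : ∃ Q, p ^ K = Q := ⟨_, rfl⟩
    obtain ⟨A, hA⟩ : ∃ A, m / Q = A := ⟨_, rfl⟩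
    obtain ⟨B, hB⟩ : ∃ B, n / Q = B := ⟨_, rfl⟩
    obtain ⟨C, hC⟩ : ∃ C, m % Q = C := ⟨_, rfl⟩
    obtain ⟨D, hD⟩ : ∃ D, n % Q = D := ⟨_, rfl⟩
    have hq0 : 0 < Q := hQ ▸ (Nat.pow_pos (by omega) : 0 < p ^ K)
    have hCq : C < Q := hC ▸ Nat.mod_lt m hq0
    have hDq : D < Q := hD ▸ Nat.mod_lt n hq0
    have hmq : Q * A + C = m := by rw [← hA, ← hC]; exact Nat.div_add_mod m Q
    have hnq : Q * B + D = n := by rw [← hB, ← hD]; exact Nat.div_add_mod n Q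
    have hQn : Q ≤ n := by rw [← hQ, ← hK]; exact Nat.pow_log_le_self p hn0
    have hnP : n < p ^ (K + 1) := by rw [← hK]; exact Nat.lt_pow_succ_log_self (by omega) n
    have hAB : A ≤ B := by rw [← hA, ← hB]; exact Nat.div_le_div_right hmn
    have hQAB : Q * A ≤ Q * B := Nat.mul_le_mul le_rfl hAB
    have hB1 : 1 ≤ B := by
      rw [← hB]; exact (Nat.one_le_div_iff hq0).2 hQn
    have hQB : Q ≤ Q * B := Nat.le_mul_of_pos_right Q (by omega)
    by_cases hC1 : p ^ (K + 1) < m + n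
    · -- Case 1
      have hmu : 2 * (p ^ (K + 1) - n) + (p ^ (K + 1) - m) < 2 * m + n := by omega
      have hmn' : p ^ (K + 1) - n ≤ p ^ (K + 1) - m := by omega
      obtain ⟨hEq, hLen, hCnt, hBnd⟩ :=
        IH f1 (by omega) _ _ hmn' (by omega) g1 (by omega)
      rw [spAux_case1_eq p f1 m n K hm0 hK hC1, spAux_case1_eq p g1 m n K hm0 hK hC1]
      have hpos : ∀ x ∈ List.replicate (m + n - p ^ (K + 1)) ((p ^ (K + 1) : ℕ) : ℤ), 0 < x := by
        intro x hx; rw [List.eq_of_mem_replicate hx]; omega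
      have hb1 : ∀ x ∈ List.replicate (m + n - p ^ (K + 1)) ((p ^ (K + 1) : ℕ) : ℤ),
          SpBnd m n x := by
        intro x hx; rw [List.eq_of_mem_replicate hx]
        exact ⟨by omega, by omega, fun _ => Or.inl (by omega)⟩
      have hb2 : ∀ x ∈ spAux p f1 (p ^ (K + 1) - n) (p ^ (K + 1) - m), SpBnd m n x := by
        intro x hx
        obtain ⟨u1, u2, u3⟩ := hBnd x hx
        refine ⟨by omega, by omega, fun hx0 => ?_⟩
        rcases u3 hx0 with h | h
        · left; omega
        · right; omega
      obtain ⟨l1, l2, l3⟩ := spec_parts m n _ _ hpos hb1 hb2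
      refine ⟨by rw [hEq], ?_, ?_, l3⟩
      · rw [l1, hLen, List.length_replicate]; omega
      · rw [l2, hCnt, List.length_replicate]; omega
    · by_cases hC2 : Q < C + D
      · -- Case 2
        have e1 : (A + B + 1) * Q = Q * A + Q * B + Q := by ring
        have hmu : 2 * ((A + B + 1) * Q - n) + ((A + B + 1) * Q - m) < 2 * m + n := by omega
        have hmn' : (A + B + 1) * Q - n ≤ (A + B + 1) * Q - m := by omega
        obtain ⟨hEq, hLen, hCnt, hBnd⟩ :=
          IH f1 (by omega) _ _ hmn' (by omega) g1 (by omega)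
        rw [spAux_case2_eq p f1 m n K Q A B C D hm0 hK hQ hA hB hC hD hC1 hC2,
            spAux_case2_eq p g1 m n K Q A B C D hm0 hK hQ hA hB hC hD hC1 hC2]
        have hpos : ∀ x ∈ List.replicate (C + D - Q) (((A + B + 1) * Q : ℕ) : ℤ), 0 < x := by
          intro x hx; rw [List.eq_of_mem_replicate hx]; omega
        have hb1 : ∀ x ∈ List.replicate (C + D - Q) (((A + B + 1) * Q : ℕ) : ℤ),
            SpBnd m n x := by
          intro x hx; rw [List.eq_of_mem_replicate hx]
          exact ⟨by omega, by omega, fun _ => Or.inl (by omega)⟩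
        have hb2 : ∀ x ∈ spAux p f1 ((A + B + 1) * Q - n) ((A + B + 1) * Q - m), SpBnd m n x := by
          intro x hx
          obtain ⟨u1, u2, u3⟩ := hBnd x hx
          refine ⟨by omega, by omega, fun hx0 => ?_⟩
          rcases u3 hx0 with h | h
          · left; omega
          · right; omega
        obtain ⟨l1, l2, l3⟩ := spec_parts m n _ _ hpos hb1 hb2
        refine ⟨by rw [hEq], ?_, ?_, l3⟩
        · rw [l1, hLen, List.length_replicate]; omega
        · rw [l2, hCnt, List.length_replicate]; omega
      · by_cases hC3 : 1 ≤ C + D ∧ 0 < A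
        · -- Case 3
          have hQA : Q ≤ Q * A := Nat.le_mul_of_pos_right Q hC3.2
          have e2 : (A + B) * Q = Q * A + Q * B := by ring
          have hmu1 : 2 * min C D + max C D < 2 * m + n := by omega
          obtain ⟨hEq1, hLen1, hCnt1, hBnd1⟩ :=
            IH f1 (by omega) (min C D) (max C D) (min_le_max) (by omega) g1 (by omega)
          have hmu2 : 2 * ((A + B) * Q - n) + ((A + B) * Q - m) < 2 * m + n := by omega
          have hmn2 : (A + B) * Q - n ≤ (A + B) * Q - m := by omega
          obtain ⟨hEq2, hLen2, hCnt2, hBnd2⟩ :=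
            IH f1 (by omega) _ _ hmn2 (by omega) g1 (by omega)
          rw [spAux_case3_eq p f1 m n K Q A B C D hm0 hK hQ hA hB hC hD hC1 hC2 hC3,
              spAux_case3_eq p g1 m n K Q A B C D hm0 hK hQ hA hB hC hD hC1 hC2 hC3]
          have hpos : ∀ x ∈ (spAux p f1 (min C D) (max C D)).map
              (fun x => x + (((A + B) * Q : ℕ) : ℤ)), 0 < x := by
            intro x hx
            obtain ⟨y, hy, rfl⟩ := List.mem_map.1 hx
            obtain ⟨u1, u2, u3⟩ := hBnd1 y hy
            omega
          have hb1 : ∀ x ∈ (spAux p f1 (min C D) (max C D)).map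
              (fun x => x + (((A + B) * Q : ℕ) : ℤ)), SpBnd m n x := by
            intro x hx
            obtain ⟨y, hy, rfl⟩ := List.mem_map.1 hx
            obtain ⟨u1, u2, u3⟩ := hBnd1 y hy
            exact ⟨by omega, by omega, fun _ => Or.inl (by omega)⟩
          have hb2 : ∀ x ∈ spAux p f1 ((A + B) * Q - n) ((A + B) * Q - m), SpBnd m n x := by
            intro x hx
            obtain ⟨u1, u2, u3⟩ := hBnd2 x hx
            refine ⟨by omega, by omega, fun hx0 => ?_⟩
            rcases u3 hx0 with h | h
            · left; omega
            · right; omega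
          obtain ⟨l1, l2, l3⟩ := spec_parts m n _ _ hpos hb1 hb2
          refine ⟨by rw [hEq1, hEq2], ?_, ?_, l3⟩
          · rw [l1, List.length_map, hLen1, hLen2]; omega
          · rw [l2, List.length_map, hLen1, hCnt2]; omega
        · by_cases hC4 : A = 0 ∧ 0 < D
          · -- Case 4
            obtain ⟨hA0, hD1⟩ := hC4
            have hQA0 : Q * A = 0 := by rw [hA0, Nat.mul_zero]
            have hmC : m = C := by omega
            have e3 : B * Q = Q * B := Nat.mul_comm B Q
            have e4 : 2 * B * Q = Q * B + Q * B := by ring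
            have hCDQ : C + D ≤ Q := by omega
            have hmu : 2 * m + (B * Q - D) < 2 * m + n := by omega
            have hmn' : m ≤ B * Q - D := by omega
            obtain ⟨hEq1, hLen1, hCnt1, hBnd1⟩ :=
              IH f1 (by omega) m (B * Q - D) hmn' (by omega) g1 (by omega)
            rw [spAux_case4_eq p f1 m n K Q A B C D hm0 hK hQ hA hB hC hD hC1 hC2 hC3 ⟨hA0, hD1⟩,
                spAux_case4_eq p g1 m n K Q A B C D hm0 hK hQ hA hB hC hD hC1 hC2 hC3 ⟨hA0, hD1⟩]
            have hmemy : ∀ x ∈ ((spAux p f1 m (B * Q - D)).filter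
                (fun x => decide (x < 0))).map (fun x => x + ((2 * B * Q : ℕ) : ℤ)),
                0 < x ∧ SpBnd m n x := by
              intro x hx
              obtain ⟨y, hy, rfl⟩ := List.mem_map.1 hx
              obtain ⟨hymem, hydec⟩ := List.mem_filter.1 hy
              have hy0 : y < 0 := by simpa using hydec
              obtain ⟨u1, u2, u3⟩ := hBnd1 y hymem
              have hgap : y ≤ -(((B * Q - D : ℕ) : ℤ) - (m : ℤ) + 1) := by
                rcases u3 (by omega) with h | h <;> omega
              exact ⟨by omega, by omega, by omega, fun _ => Or.inl (by omega)⟩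
            have hb2 : ∀ x ∈ List.replicate (n - m) (0 : ℤ), SpBnd m n x := by
              intro x hx; rw [List.eq_of_mem_replicate hx]
              exact ⟨by omega, by omega, fun h => absurd rfl h⟩
            obtain ⟨l1, l2, l3⟩ := spec_parts m n _ _ (fun x hx => (hmemy x hx).1)
              (fun x hx => (hmemy x hx).2) hb2
            have hs1len : (((spAux p f1 m (B * Q - D)).filter
                (fun x => decide (x < 0))).map (fun x => x + ((2 * B * Q : ℕ) : ℤ))).length
                = m := by
              rw [List.length_map, ← List.countP_eq_length_filter, hCnt1]
            have hs2cnt : (List.replicate (n - m) (0 : ℤ)).countP (fun x => decide (x < 0)) = 0 := by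
              rw [List.countP_eq_zero.2]
              intro x hx; rw [List.eq_of_mem_replicate hx]; simp
            refine ⟨by rw [hEq1], ?_, ?_, l3⟩
            · rw [l1, hs1len, List.length_replicate]; omega
            · rw [l2, hs1len, hs2cnt]; omega
          · by_cases hC5 : A = 0 ∧ D = 0
            · -- Case 5
              obtain ⟨hA0, hD0⟩ := hC5
              have hQA0 : Q * A = 0 := by rw [hA0, Nat.mul_zero]
              have hmC : m = C := by omega
              have e3 : B * Q = Q * B := Nat.mul_comm B Q
              rw [spAux_case5_eq p f1 m n K Q A B C D hm0 hK hQ hA hB hC hD hC1 hC2 hC3 hC4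
                  ⟨hA0, hD0⟩,
                  spAux_case5_eq p g1 m n K Q A B C D hm0 hK hQ hA hB hC hD hC1 hC2 hC3 hC4
                  ⟨hA0, hD0⟩]
              have hpos : ∀ x ∈ List.replicate m ((B * Q : ℕ) : ℤ), 0 < x := by
                intro x hx; rw [List.eq_of_mem_replicate hx]; omega
              have hb1 : ∀ x ∈ List.replicate m ((B * Q : ℕ) : ℤ), SpBnd m n x := by
                intro x hx; rw [List.eq_of_mem_replicate hx]
                exact ⟨by omega, by omega, fun _ => Or.inl (by omega)⟩
              have hb2 : ∀ x ∈ List.replicate (B * Q - m) (0 : ℤ), SpBnd m n x := by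
                intro x hx; rw [List.eq_of_mem_replicate hx]
                exact ⟨by omega, by omega, fun h => absurd rfl h⟩
              obtain ⟨l1, l2, l3⟩ := spec_parts m n _ _ hpos hb1 hb2
              have hs2cnt : (List.replicate (B * Q - m) (0 : ℤ)).countP
                  (fun x => decide (x < 0)) = 0 := by
                rw [List.countP_eq_zero.2]
                intro x hx; rw [List.eq_of_mem_replicate hx]; simp
              refine ⟨rfl, ?_, ?_, l3⟩
              · rw [l1, List.length_replicate, List.length_replicate]; omega
              · rw [l2, hs2cnt, List.length_replicate]; omega
            · -- Case 6
              have hA1 : 0 < A := by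
                rcases Nat.eq_zero_or_pos A with h | h
                · exfalso
                  rcases Nat.eq_zero_or_pos D with h' | h'
                  · exact hC5 ⟨h, h'⟩
                  · exact hC4 ⟨h, h'⟩
                · exact h
              have hCD0 : C = 0 ∧ D = 0 := by
                have : ¬ (1 ≤ C + D) := fun h => hC3 ⟨h, hA1⟩
                omega
              obtain ⟨hC0, hD0⟩ := hCD0
              have hQA : Q ≤ Q * A := Nat.le_mul_of_pos_right Q hA1
              have e5 : (A - 1) * Q = Q * A - Q := by
                rw [Nat.sub_mul, Nat.one_mul, Nat.mul_comm A Q]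
              have e6 : (B - 1) * Q = Q * B - Q := by
                rw [Nat.sub_mul, Nat.one_mul, Nat.mul_comm B Q]
              have e7 : (A + B - 1) * Q = Q * A + Q * B - Q := by
                rw [Nat.sub_mul, Nat.one_mul, Nat.add_mul, Nat.mul_comm A Q, Nat.mul_comm B Q]
              have hmu : 2 * ((A - 1) * Q) + (B - 1) * Q < 2 * m + n := by omega
              have hmn' : (A - 1) * Q ≤ (B - 1) * Q := by omega
              obtain ⟨hEq1, hLen1, hCnt1, hBnd1⟩ :=
                IH f1 (by omega) _ _ hmn' (by omega) g1 (by omega)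
              rw [spAux_case6_eq p f1 m n K Q A B C D hm0 hK hQ hA hB hC hD hC1 hC2 hC3 hC4 hC5,
                  spAux_case6_eq p g1 m n K Q A B C D hm0 hK hQ hA hB hC hD hC1 hC2 hC3 hC4 hC5]
              have hpos : ∀ x ∈ List.replicate Q (((A + B - 1) * Q : ℕ) : ℤ), 0 < x := by
                intro x hx; rw [List.eq_of_mem_replicate hx]; omega
              have hb1 : ∀ x ∈ List.replicate Q (((A + B - 1) * Q : ℕ) : ℤ), SpBnd m n x := by
                intro x hx; rw [List.eq_of_mem_replicate hx]
                exact ⟨by omega, by omega, fun _ => Or.inl (by omega)⟩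
              have hb2 : ∀ x ∈ spAux p f1 ((A - 1) * Q) ((B - 1) * Q), SpBnd m n x := by
                intro x hx
                obtain ⟨u1, u2, u3⟩ := hBnd1 x hx
                refine ⟨by omega, by omega, fun hx0 => ?_⟩
                rcases u3 hx0 with h | h
                · left; omega
                · right; omega
              obtain ⟨l1, l2, l3⟩ := spec_parts m n _ _ hpos hb1 hb2
              refine ⟨by rw [hEq1], ?_, ?_, l3⟩
              · rw [l1, hLen1, List.length_replicate]; omega
              · rw [l2, hCnt1, List.length_replicate]; omega

lemma coeM_range (m : ℕ) :
    (do let a ← List.range m; pure ((a : ℕ) : ℤ)) = (List.range m).map (fun i : ℕ => (i : ℤ)) := by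
  simp [List.map_eq_flatMap]

lemma target_cons (m n m' n' : ℕ) (h1 : m = m' + 1) (h2 : (m : ℤ) + n = (m' : ℤ) + n' + 2) :
    (List.range m).map (fun i => (m : ℤ) + (n : ℤ) - 2 * ((i : ℤ) + 1) + 1)
      = ((m : ℤ) + n - 1) ::
        (List.range m').map (fun i => (m' : ℤ) + (n' : ℤ) - 2 * ((i : ℤ) + 1) + 1) := by
  show (List.map _ (do let a ← List.range m; pure ((a : ℕ) : ℤ)))
      = _ :: (List.map _ (do let a ← List.range m'; pure ((a : ℕ) : ℤ)))
  rw [coeM_range, coeM_range]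
  simp only [List.map_map]
  subst h1
  rw [List.range_succ_eq_map, List.map_cons]
  simp only [List.map_map]
  congr 1
  · simp only [Function.comp_apply]
    push_cast
    ring
  · apply List.map_congr_left
    intro i hi
    simp only [Function.comp_apply, Nat.succ_eq_add_one]
    push_cast
    omega

/-- **Proposition 1, Case 2 (Barry).** Let `p` be prime, `0 < m ≤ n` with
`pᵏ ≤ n < p^(k+1)`, `n = b·pᵏ + d` (`0 < b < p`, `0 ≤ d < pᵏ`),
`m = a·pᵏ + c` (`0 ≤ a < p`, `0 ≤ c < pᵏ`), `m + n ≤ p^(k+1)` and `c + d > pᵏ`.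
Then `λ(m,n,p)` is standard iff `c + d − pᵏ = 1` and
`λ((a+b+1)pᵏ − n, (a+b+1)pᵏ − m, p)` is standard. -/
theorem jordanPartition_standard_iff_case2 (p : ℕ) (hp : Nat.Prime p)
    (m n k a b c d : ℕ) (hm : 0 < m) (hmn : m ≤ n)
    (hk1 : p ^ k ≤ n) (hk2 : n < p ^ (k + 1))
    (hn : n = b * p ^ k + d) (hb0 : 0 < b) (hbp : b < p) (hd : d < p ^ k)
    (hma : m = a * p ^ k + c) (hap : a < p) (hc : c < p ^ k)
    (hcase1 : m + n ≤ p ^ (k + 1)) (hcase2 : p ^ k < c + d) :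
    IsStandard p m n ↔
      (c + d - p ^ k = 1 ∧
        IsStandard p ((a + b + 1) * p ^ k - n) ((a + b + 1) * p ^ k - m)) := by
  have hp2 : 2 ≤ p := hp.two_le
  have hq0 : 0 < p ^ k := (Nat.pow_pos (by omega) : 0 < p ^ k)
  have hlog : Nat.log p n = k := Nat.log_eq_of_pow_le_of_lt_pow hk1 hk2
  have hdivn : n / p ^ k = b := by
    rw [hn, Nat.add_comm, Nat.add_mul_div_right _ _ hq0, Nat.div_eq_of_lt hd, Nat.zero_add]
  have hmodn : n % p ^ k = d := by
    rw [hn, Nat.add_comm, Nat.add_mul_mod_self_right, Nat.mod_eq_of_lt hd]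
  have hdivm : m / p ^ k = a := by
    rw [hma, Nat.add_comm, Nat.add_mul_div_right _ _ hq0, Nat.div_eq_of_lt hc, Nat.zero_add]
  have hmodm : m % p ^ k = c := by
    rw [hma, Nat.add_comm, Nat.add_mul_mod_self_right, Nat.mod_eq_of_lt hc]
  have hm0 : m ≠ 0 := by omega
  have hC1 : ¬ p ^ (k + 1) < m + n := by omega
  have e1 : (a + b + 1) * p ^ k = a * p ^ k + b * p ^ k + p ^ k := by ring
  have hmu : 2 * ((a + b + 1) * p ^ k - n) + ((a + b + 1) * p ^ k - m) < 2 * m + n := by omega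
  have hmn' : (a + b + 1) * p ^ k - n ≤ (a + b + 1) * p ^ k - m := by omega
  obtain ⟨hEq, hLen, -, -⟩ := spAux_spec p hp2 (2 * m + n)
    ((a + b + 1) * p ^ k - n) ((a + b + 1) * p ^ k - m) hmn' (by omega)
    (2 * ((a + b + 1) * p ^ k - n) + ((a + b + 1) * p ^ k - m) + 1) (by omega)
  have hLen' : (spAux p (2 * ((a + b + 1) * p ^ k - n) + ((a + b + 1) * p ^ k - m) + 1)
      ((a + b + 1) * p ^ k - n) ((a + b + 1) * p ^ k - m)).length
      = ((a + b + 1) * p ^ k - n) + ((a + b + 1) * p ^ k - m) := by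
    rw [← hEq]; exact hLen
  have hunfold : jordanPartition p m n
      = List.replicate (c + d - p ^ k) (((a + b + 1) * p ^ k : ℕ) : ℤ) ++
          jordanPartition p ((a + b + 1) * p ^ k - n) ((a + b + 1) * p ^ k - m) := by
    unfold jordanPartition sp
    rw [spAux_case2_eq p (2 * m + n) m n k (p ^ k) a b c d hm0 hlog rfl hdivm hdivn hmodm hmodn
        hC1 hcase2]
    rw [hEq]
    rw [List.append_assoc, List.take_append,
      List.take_of_length_le (by rw [List.length_replicate]; omega), List.length_replicate]
    rw [show m - (c + d - p ^ k) = (a + b + 1) * p ^ k - n by omega]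
    rw [List.take_append, hLen',
      show ((a + b + 1) * p ^ k - n) - (((a + b + 1) * p ^ k - n) + ((a + b + 1) * p ^ k - m)) = 0
        by omega,
      List.take_zero, List.append_nil]
  constructor
  · intro hstd
    unfold IsStandard at hstd
    rw [hunfold] at hstd
    have ht1 : c + d - p ^ k = 1 := by
      by_contra hne
      have ht2 : 2 ≤ c + d - p ^ k := by omega
      have hm2 : 2 ≤ m := by omega
      obtain ⟨t2, ht2e⟩ : ∃ t2, c + d - p ^ k = t2 + 2 := ⟨c + d - p ^ k - 2, by omega⟩
      rw [ht2e] at hstd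
      rw [show t2 + 2 = t2 + 1 + 1 from rfl, List.replicate_succ, List.replicate_succ] at hstd
      rw [target_cons m n (m - 1) (n - 1) (by omega) (by omega),
          target_cons (m - 1) (n - 1) (m - 2) (n - 2) (by omega) (by omega)] at hstd
      simp only [List.cons_append, List.cons.injEq] at hstd
      obtain ⟨hx1, hx2, -⟩ := hstd
      omega
    rw [ht1] at hstd
    rw [target_cons m n ((a + b + 1) * p ^ k - n) ((a + b + 1) * p ^ k - m)
        (by omega) (by omega)] at hstd
    rw [List.replicate_one, List.singleton_append] at hstd
    injection hstd with h1 h2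
    exact ⟨ht1, h2⟩
  · rintro ⟨ht1, hstd'⟩
    unfold IsStandard
    rw [hunfold, ht1, List.replicate_one, List.singleton_append,
        target_cons m n ((a + b + 1) * p ^ k - n) ((a + b + 1) * p ^ k - m)
        (by omega) (by omega)]
    unfold IsStandard at hstd'
    rw [hstd']
    congr 1
    omega
end

section
/- Let p be a prime and let 0 < m ≤ n with p^k ≤ n < p^{k+1}. Suppose n = b·p^k with 0 < b < p and 0 < m < p^k (Case 5 of the recursive definition of s_p). Then λ(m,n,p) is standard if and only if m = 1. -/
/-- **Proposition 1, Case 5 (Barry).** Let `p` be prime, `0 < m ≤ n` with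
`pᵏ ≤ n < p^(k+1)`, `n = b·pᵏ` with `0 < b < p`, and `0 < m < pᵏ`. Then `λ(m,n,p)`
is standard iff `m = 1`. -/
theorem jordanPartition_standard_iff_case5 (p : ℕ) (hp : Nat.Prime p)
    (m n k b : ℕ) (hm : 0 < m) (hmn : m ≤ n)
    (hk1 : p ^ k ≤ n) (hk2 : n < p ^ (k + 1))
    (hn : n = b * p ^ k) (hb0 : 0 < b) (hbp : b < p) (hmq : m < p ^ k) :
    IsStandard p m n ↔ m = 1 := by
  have hq0 : 0 < p ^ k := pow_pos hp.pos k
  have hlog : Nat.log p n = k := Nat.log_eq_of_pow_le_of_lt_pow hk1 hk2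
  have hbdiv : n / p ^ k = b := by rw [hn, Nat.mul_div_cancel _ hq0]
  have hdmod : n % p ^ k = 0 := by rw [hn]; exact Nat.mul_mod_left b _
  have hadiv : m / p ^ k = 0 := Nat.div_eq_of_lt hmq
  have hcmod : m % p ^ k = m := Nat.mod_eq_of_lt hmq
  have hsum : ¬ (p ^ (k+1) < m + n) := by
    have h1 : n ≤ (p-1) * p^k := by
      rw [hn]; exact Nat.mul_le_mul_right _ (by omega)
    have h2 : (p-1) * p^k + p^k = p^(k+1) := by
      have e1 : (p-1) * p^k + p^k = (p-1+1) * p^k := by ring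
      have e2 : p - 1 + 1 = p := by have := hp.one_lt; omega
      rw [e1, e2, pow_succ, mul_comm]
    omega
  have hjp : jordanPartition p m n = List.replicate m (n : ℤ) := by
    unfold jordanPartition sp
    rw [spAux]
    simp only [hlog, hbdiv, hdmod, hadiv, hcmod, hm.ne', if_false, if_neg hsum,
      if_neg (by omega : ¬ p ^ k < m % (p^k) + n % (p^k))]
    rw [if_neg (by omega : ¬ p ^ k < m + 0),
      if_neg (by simp : ¬ (1 ≤ m + 0 ∧ 0 < 0)),
      if_neg (by simp : ¬ (True ∧ 0 < 0)),
      if_pos ⟨trivial, trivial⟩]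
    rw [← hn, List.append_assoc]
    exact List.take_left' List.length_replicate
  rw [IsStandard, hjp]
  constructor
  · intro h
    obtain ⟨m', rfl⟩ := Nat.exists_eq_succ_of_ne_zero hm.ne'
    rw [List.replicate_succ, List.range_succ_eq_map] at h
    simp at h
    omega
  · intro h
    subst h
    rw [show List.range 1 = [0] from rfl]
    simp
    omega
end
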